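/- arXiv:math/9305206 — 9 statements merged into one kernel-verified Lean document; each statement's English description precedes it below -/
import Mathlib

section
/- For every infinite cardinal κ, the square P_κ × P_κ satisfies the partition relation P_κ × P_κ → (P_κ)¹₂: whenever P_κ × P_κ is partitioned into two pieces, one of the pieces contains a homeomorphic copy of P_κ. -/
/-- The carrier of the space `P κ`: the ordinal `κ + 1`, realized as `WithTop` of a type
of order type `κ.ord`, with `⊤` playing the role of the point `κ`. -/
abbrev PCarrier (κ : Cardinal) := WithTop κ.ord.ToType

/-- The topology on `P κ`: every point below `κ` is isolated, and a set containing the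
top point `κ` is open iff it contains a final segment `(ξ, κ]`. -/
instance PTop (κ : Cardinal) : TopologicalSpace (PCarrier κ) where
  IsOpen U := (⊤ : PCarrier κ) ∈ U →
    (IsEmpty κ.ord.ToType ∨ ∃ ξ : κ.ord.ToType, ∀ x : κ.ord.ToType, ξ < x → ((x : PCarrier κ) ∈ U))
  isOpen_univ := by
    intro _
    rcases isEmpty_or_nonempty κ.ord.ToType with h | h
    · exact Or.inl h
    · exact Or.inr ⟨Classical.arbitrary _, fun x _ => trivial⟩
  isOpen_inter := by
    intro U V hU hV hUV
    rcases hU hUV.1 with h1 | ⟨ξ₁, h1⟩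
    · exact Or.inl h1
    rcases hV hUV.2 with h2 | ⟨ξ₂, h2⟩
    · exact Or.inl h2
    exact Or.inr ⟨max ξ₁ ξ₂, fun x hx =>
      ⟨h1 x (lt_of_le_of_lt (le_max_left _ _) hx), h2 x (lt_of_le_of_lt (le_max_right _ _) hx)⟩⟩
  isOpen_sUnion := by
    intro S hS hmem
    rcases hmem with ⟨U, hUS, hU⟩
    rcases hS U hUS hU with h | ⟨ξ, h⟩
    · exact Or.inl h
    · exact Or.inr ⟨ξ, fun x hx => ⟨U, hUS, h x hx⟩⟩

/-- `HasCopy Y P` : the set `P` (in an ambient space `X`) contains a subspace homeomorphic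
to `Y`. -/
def HasCopy (Y : Type*) [TopologicalSpace Y] {X : Type*} [TopologicalSpace X]
    (P : Set X) : Prop :=
  ∃ s : Set X, s ⊆ P ∧ Nonempty (Y ≃ₜ s)

/-!
Every copy of `P κ` used here is the range of `t ↦ (e t, q t)` (or its mirror image), where
`e` extends a strictly monotone map `κ → κ` by `κ ↦ κ` and `q` is continuous; the first
coordinate alone is already an embedding.

If `(κ, κ) ∈ X₀`, look at the row `A = {x | (x, κ) ∈ X₀}`. If `|A| = κ`, then `A × {κ}` and
`(κ, κ)` give a copy in `X₀`. Otherwise `κ ∖ A` has size `κ` and `(x, κ) ∈ X₁` for `x ∉ A`.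
If some such `x` has a column `{y | (x, y) ∈ X₁}` of size `κ`, then this column together with
`(x, κ)` is a copy in `X₁`. Otherwise every column over `κ ∖ A` meets `X₀` unboundedly, so we
may pick `(x_α, y_α) ∈ X₀` with `x_α` increasing and `y_α > x_α`; with `(κ, κ)` this is a copy
in `X₀`.
-/

open Cardinal Filter Function Set Topology
open scoped Ordinal

theorem HasCopy.of_isEmbedding {Y X : Type*} [TopologicalSpace Y] [TopologicalSpace X]
    {P : Set X} {f : Y → X} (hf : IsEmbedding f) (hP : range f ⊆ P) : HasCopy Y P :=
  ⟨range f, hP, ⟨hf.toHomeomorph⟩⟩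

namespace PCarrier

variable {κ : Cardinal}

theorem continuous_of_tendsto {Z : Type*} [TopologicalSpace Z] {g : PCarrier κ → Z}
    (h : Tendsto (fun α : κ.ord.ToType => g α) atTop (𝓝 (g ⊤))) : Continuous g := by
  refine continuous_def.2 fun U hU hgU => ?_
  rcases isEmpty_or_nonempty κ.ord.ToType with hempty | hne
  · exact Or.inl hempty
  · obtain ⟨ξ, hξ⟩ := tendsto_atTop'.1 h U (hU.mem_nhds hgU)
    exact Or.inr ⟨ξ, fun α hα => hξ α hα.le⟩

variable [NoMaxOrder κ.ord.ToType]

theorem tendsto_coe_atTop : Tendsto ((↑) : κ.ord.ToType → PCarrier κ) atTop (𝓝 ⊤) := by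
  refine tendsto_nhds.2 fun U hU htop => ?_
  rcases hU htop with hempty | ⟨ξ, hξ⟩
  · exact univ_mem' fun α => isEmptyElim α
  · exact (eventually_gt_atTop ξ).mono hξ

theorem continuous_map {f : κ.ord.ToType → κ.ord.ToType} (hf : Tendsto f atTop atTop) :
    Continuous (WithTop.map f : PCarrier κ → PCarrier κ) :=
  continuous_of_tendsto (tendsto_coe_atTop.comp hf)

theorem isEmbedding_map {e : κ.ord.ToType → κ.ord.ToType} (he : StrictMono e) :
    IsEmbedding (WithTop.map e : PCarrier κ → PCarrier κ) := by
  -- the left inverse sends the points outside the range to `⊤`, so it is continuous at `⊤`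
  have he_inj : Injective (WithTop.map e : PCarrier κ → PCarrier κ) :=
    WithTop.map_injective he.injective
  refine LeftInverse.isEmbedding (f := extend (WithTop.map e) id fun _ => ⊤)
    (he_inj.extend_apply _ _) (continuous_of_tendsto ?_)
    (continuous_map (tendsto_atTop_mono (fun _ => he.le_apply) tendsto_id))
  rcases isEmpty_or_nonempty κ.ord.ToType with hempty | hne
  · exact tendsto_of_isEmpty
  refine fun U hU => mem_map.2 ?_
  rw [show extend (WithTop.map e) id (fun _ => ⊤) ⊤ = ⊤ from he_inj.extend_apply _ _ ⊤] at hU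
  obtain ⟨ξ, hξ⟩ := eventually_atTop.1 (tendsto_coe_atTop hU)
  filter_upwards [eventually_ge_atTop (e ξ)] with β hβ
  by_cases hβe : ∃ α, e α = β
  · obtain ⟨α, rfl⟩ := hβe
    rw [mem_preimage, show ((e α : κ.ord.ToType) : PCarrier κ) = WithTop.map e α from rfl,
      he_inj.extend_apply]
    exact hξ α (he.le_iff_le.1 hβ)
  · rw [mem_preimage, extend_apply']
    · exact mem_of_mem_nhds hU
    · rintro ⟨_ | α, hα⟩
      · exact WithTop.top_ne_coe hα
      · exact hβe ⟨α, WithTop.coe_injective hα⟩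

end PCarrier

theorem hasCopy_of_forall_mem {κ : Cardinal} [NoMaxOrder κ.ord.ToType]
    {e : κ.ord.ToType → κ.ord.ToType} (he : StrictMono e) {q : PCarrier κ → PCarrier κ}
    (hq : Continuous q) {X : Set (PCarrier κ × PCarrier κ)}
    (hX : ∀ t, (WithTop.map e t, q t) ∈ X) : HasCopy (PCarrier κ) X :=
  .of_isEmbedding (.of_comp ((PCarrier.isEmbedding_map he).continuous.prodMk hq) continuous_fst
    (PCarrier.isEmbedding_map he)) (range_subset_iff.2 hX)

namespace Cardinal

variable {κ : Cardinal}

theorem mk_set_ord_toType_le (A : Set κ.ord.ToType) : #A ≤ κ :=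
  (mk_set_le A).trans_eq (mk_ord_toType κ)

theorem exists_strictMono_mem_of_mk_eq {A : Set κ.ord.ToType} (hA : #A = κ) :
    ∃ e : κ.ord.ToType → κ.ord.ToType, StrictMono e ∧ ∀ α, e α ∈ A := by
  have hle : typeLT κ.ord.ToType ≤ typeLT A := by
    rw [Ordinal.type_toType, ord_le, Ordinal.card_type, hA]
  obtain ⟨f⟩ := Ordinal.type_le_iff.1 hle
  exact ⟨fun α => f α, fun _ _ h => Subtype.coe_lt_coe.2 (f.map_rel_iff.2 h), fun α => (f α).2⟩

theorem mk_compl_eq_of_mk_lt (hκ : ℵ₀ ≤ κ) {A : Set κ.ord.ToType} (hA : #A < κ) :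
    #(Aᶜ : Set κ.ord.ToType) = κ := by
  have : Infinite κ.ord.ToType := infinite_iff.2 (by rwa [mk_ord_toType])
  simpa using mk_compl_of_infinite A (by rwa [mk_ord_toType])

theorem exists_gt_notMem_of_mk_lt (hκ : ℵ₀ ≤ κ) {A : Set κ.ord.ToType} (hA : #A < κ)
    (γ : κ.ord.ToType) : ∃ y, γ < y ∧ y ∉ A := by
  have := noMaxOrder hκ
  obtain ⟨δ, hδ⟩ := exists_gt γ
  have hsmall : #(A ∪ Iio δ : Set κ.ord.ToType) < κ :=
    (mk_union_le A (Iio δ)).trans_lt (add_lt_of_lt hκ hA (by simpa using mk_Iio_lt δ))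
  obtain ⟨y, hy⟩ : ∃ y, y ∉ A ∪ Iio δ := by
    by_contra! h
    refine hsmall.not_ge ?_
    calc κ = #(Set.univ : Set κ.ord.ToType) := by rw [mk_univ, mk_ord_toType]
      _ ≤ _ := mk_le_mk_of_subset fun y _ => h y
  exact ⟨y, hδ.trans_le (not_lt.1 fun h => hy (Or.inr h)), fun h => hy (Or.inl h)⟩

end Cardinal

theorem hasCopy_or_hasCopy_of_top_mem {κ : Cardinal} (hκ : ℵ₀ ≤ κ)
    {X₀ X₁ : Set (PCarrier κ × PCarrier κ)} (hpart : X₀ ∪ X₁ = Set.univ) (htop : (⊤, ⊤) ∈ X₀) :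
    HasCopy (PCarrier κ) X₀ ∨ HasCopy (PCarrier κ) X₁ := by
  have := noMaxOrder hκ
  have hmem (p) : p ∈ X₀ ∪ X₁ := hpart ▸ mem_univ p
  set A : Set κ.ord.ToType := {x | ((x : PCarrier κ), ⊤) ∈ X₀}
  rcases (mk_set_ord_toType_le A).lt_or_eq with hA | hA
  · obtain ⟨e, he, heA⟩ := exists_strictMono_mem_of_mk_eq (mk_compl_eq_of_mk_lt hκ hA)
    by_cases hcol : ∃ x ∈ Aᶜ, #{y : κ.ord.ToType | ((x : PCarrier κ), (y : PCarrier κ)) ∈ X₁} = κ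
    · obtain ⟨x, hxA, hcolx⟩ := hcol
      obtain ⟨e', he', he'col⟩ := exists_strictMono_mem_of_mk_eq hcolx
      refine .inr (.of_isEmbedding ((isEmbedding_prodMkRight _).comp
        (PCarrier.isEmbedding_map he')) (range_subset_iff.2 (WithTop.forall.2 ⟨?_, he'col⟩)))
      exact (hmem _).resolve_left hxA
    · have hrow (α) : ∃ y, e α < y ∧ ((e α : PCarrier κ), (y : PCarrier κ)) ∈ X₀ := by
        obtain ⟨y, hy, hyX₁⟩ := exists_gt_notMem_of_mk_lt hκ
          ((mk_set_ord_toType_le _).lt_of_ne fun h => hcol ⟨_, heA α, h⟩) (e α)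
        exact ⟨y, hy, (hmem _).resolve_right hyX₁⟩
      choose y hy hyX₀ using hrow
      exact .inl (hasCopy_of_forall_mem he (PCarrier.continuous_map (tendsto_atTop_mono
        (fun α => he.le_apply.trans (hy α).le) tendsto_id)) (WithTop.forall.2 ⟨htop, hyX₀⟩))
  · obtain ⟨e, he, heA⟩ := exists_strictMono_mem_of_mk_eq hA
    exact .inl (hasCopy_of_forall_mem he continuous_const (WithTop.forall.2 ⟨htop, heA⟩))

/-- Corollary 4.2: for every infinite cardinal `κ`, `P_κ × P_κ → (P_κ)¹₂`. -/
theorem Pkappa_square_arrow (κ : Cardinal) (hκ : Cardinal.aleph0 ≤ κ)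
    (X₀ X₁ : Set (PCarrier κ × PCarrier κ)) (hpart : X₀ ∪ X₁ = Set.univ) :
    HasCopy (PCarrier κ) X₀ ∨ HasCopy (PCarrier κ) X₁ := by
  rcases (hpart ▸ mem_univ (⊤, ⊤) : ((⊤, ⊤) : PCarrier κ × PCarrier κ) ∈ X₀ ∪ X₁) with h | h
  · exact hasCopy_or_hasCopy_of_top_mem hκ hpart h
  · exact (hasCopy_or_hasCopy_of_top_mem hκ (union_comm X₀ X₁ ▸ hpart) h).symm
end

section
/- For every infinite cardinal κ, letting C_κ denote the one-point compactification of the discrete space of cardinality κ, the relation C_κ × C_κ → (C_κ)¹₂ holds: whenever C_κ × C_κ is partitioned into two pieces, one piece contains a homeomorphic copy of C_κ. -/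
/-! `κ` distinct points converging to a point outside them form, with their limit, a copy of
`C_κ`: a continuous injection of a compact space into a Hausdorff one is an embedding.

Say `(∞, ∞) ∈ P`; we find a copy of `C_κ` in `P` or in `Pᶜ`. If `κ` many points
`(b, ∞)` lie in `P`, they converge to `(∞, ∞)`. Otherwise `κ` many lie in `Pᶜ`. If one of
these, `(b, ∞)`, has `κ` many points `(b, c)` of `Pᶜ` in its column, they converge to it. If
not, every such column meets `P` in `κ` points, and a transfinite recursion picks from them
`(b, c b)` with `c` injective; these converge to `(∞, ∞)`. -/

open Cardinal Filter Function OnePoint Set Topology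

universe u

lemma HasCopy.mono {Y X : Type*} [TopologicalSpace Y] [TopologicalSpace X] {P Q : Set X}
    (h : HasCopy Y P) (hPQ : P ⊆ Q) : HasCopy Y Q :=
  let ⟨s, hsP, hs⟩ := h
  ⟨s, hsP.trans hPQ, hs⟩

theorem Cardinal.mk_eq_or_mk_compl_eq {α : Type u} [Infinite α] (s : Set α) :
    #s = #α ∨ #(sᶜ : Set α) = #α :=
  or_iff_not_imp_left.2 fun h => mk_compl_of_infinite s ((mk_set_le s).lt_of_ne h)

theorem Cardinal.exists_injective_forall_mem {ι β : Type u} (s : ι → Set β)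
    (hs : ∀ i, #ι ≤ #(s i)) : ∃ f : ι → β, Injective f ∧ ∀ i, f i ∈ s i := by
  obtain ⟨_, _, hord⟩ := exists_ord_eq_type_lt ι
  -- fewer than `#ι` values are chosen below `i`, so they cannot exhaust `s i`
  have hfresh : ∀ i (g : Iio i → β), (s i \ range g).Nonempty := fun i g => by
    by_contra h
    rw [not_nonempty_iff_eq_empty, sdiff_eq_empty] at h
    exact (mk_Iio_lt i hord).not_ge <| (hs i).trans <| (mk_le_mk_of_subset h).trans mk_range_le
  let f : ι → β := WellFoundedLT.fix fun i g => (hfresh i fun j => g j.1 j.2).some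
  have hf : ∀ i, f i ∈ s i \ range fun j : Iio i => f j := fun i => by
    rw [show f i = _ from WellFoundedLT.fix_eq _ i]
    exact (hfresh i _).some_mem
  refine ⟨f, fun i j hij => ?_, fun i => (hf i).1⟩
  by_contra hne
  rcases lt_or_gt_of_ne hne with h | h
  · exact (hf j).2 ⟨⟨i, h⟩, hij⟩
  · exact (hf i).2 ⟨⟨j, h⟩, hij.symm⟩

namespace OnePoint

variable {α : Type u} [TopologicalSpace α] [DiscreteTopology α]

lemma tendsto_coe_comp_cofinite {ι : Type*} {f : ι → α} (hf : Injective f) :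
    Tendsto (fun i => (f i : OnePoint α)) cofinite (𝓝 ∞) :=
  ((continuous_iff_from_discrete id).1 continuous_id).comp hf.tendsto_cofinite

lemma isClosedEmbedding_elim {X : Type*} [TopologicalSpace X] [T2Space X] {g : α → X}
    (hg : Injective g) {q : X} (hq : q ∉ range g) (htend : Tendsto g cofinite (𝓝 q)) :
    IsClosedEmbedding fun x : OnePoint α => x.elim q g := by
  refine Continuous.isClosedEmbedding ((continuous_iff_from_discrete _).2 htend) ?_
  rintro (_ | a) (_ | b) hab
  · rfl
  · exact (hq ⟨b, hab.symm⟩).elim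
  · exact (hq ⟨a, hab⟩).elim
  · exact congrArg some (hg hab)

lemma hasCopy_of_tendsto {X : Type*} [TopologicalSpace X] [T2Space X] {P : Set X}
    {ι : Type u} (hι : #ι = #α) {g : ι → X} (hg : Injective g) {q : X} (hq : q ∉ range g)
    (htend : Tendsto g cofinite (𝓝 q)) (hP : insert q (range g) ⊆ P) :
    HasCopy (OnePoint α) P := by
  obtain ⟨e⟩ := Cardinal.eq.1 hι.symm
  have hemb := isClosedEmbedding_elim (hg.comp e.injective) (by rwa [e.surjective.range_comp])
    (htend.comp e.injective.tendsto_cofinite)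
  refine ⟨_, ?_, ⟨hemb.isEmbedding.toHomeomorph⟩⟩
  have hrange : range (fun x : OnePoint α => x.elim q (g ∘ e)) = insert q (range g) := by
    rw [← e.surjective.range_comp g]
    exact Option.range_elim q (g ∘ e)
  exact hrange ▸ hP

end OnePoint

theorem hasCopy_or_hasCopy_compl {α : Type u} [TopologicalSpace α] [DiscreteTopology α]
    [Infinite α] {P : Set (OnePoint α × OnePoint α)} (hP : (∞, ∞) ∈ P) :
    HasCopy (OnePoint α) P ∨ HasCopy (OnePoint α) Pᶜ := by
  set S : Set α := {b | ((b : OnePoint α), ∞) ∈ P}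
  rcases mk_eq_or_mk_compl_eq S with hS | hS
  · left
    refine hasCopy_of_tendsto hS (g := fun b : S => ((b : OnePoint α), ∞))
      (fun b b' h => Subtype.val_injective (coe_injective (congrArg Prod.fst h)))
      (fun ⟨b, h⟩ => coe_ne_infty _ (congrArg Prod.fst h))
      ((tendsto_coe_comp_cofinite Subtype.val_injective).prodMk_nhds tendsto_const_nhds) ?_
    rintro _ (rfl | ⟨b, rfl⟩)
    exacts [hP, b.2]
  set column : α → Set α := fun b => {c | ((b : OnePoint α), (c : OnePoint α)) ∈ P}
  by_cases hcol : ∀ b : ↥Sᶜ, #(column b) = #α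
  · left
    obtain ⟨c, hc, hccol⟩ :=
      exists_injective_forall_mem (fun b : ↥Sᶜ => column b) fun b => (hS.trans (hcol b).symm).le
    refine hasCopy_of_tendsto hS
      (g := fun b : ↥Sᶜ => ((b : OnePoint α), (c b : OnePoint α)))
      (fun b b' h => Subtype.val_injective (coe_injective (congrArg Prod.fst h)))
      (fun ⟨b, h⟩ => coe_ne_infty _ (congrArg Prod.fst h))
      ((tendsto_coe_comp_cofinite Subtype.val_injective).prodMk_nhds
        (tendsto_coe_comp_cofinite hc)) ?_
    rintro _ (rfl | ⟨b, rfl⟩)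
    exacts [hP, hccol b]
  · right
    push Not at hcol
    obtain ⟨⟨b, hb⟩, hbcol⟩ := hcol
    refine hasCopy_of_tendsto ((mk_eq_or_mk_compl_eq _).resolve_left hbcol)
      (g := fun c : ↥(column b)ᶜ => ((b : OnePoint α), (c : OnePoint α)))
      (fun c c' h => Subtype.val_injective (coe_injective (congrArg Prod.snd h)))
      (fun ⟨c, h⟩ => coe_ne_infty _ (congrArg Prod.snd h))
      (tendsto_const_nhds.prodMk_nhds (tendsto_coe_comp_cofinite Subtype.val_injective)) ?_
    rintro _ (rfl | ⟨c, rfl⟩)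
    exacts [hb, c.2]

/-- For every infinite cardinal `κ`, with `C_κ` the one-point compactification of the
discrete space of cardinality `κ`, one has `C_κ × C_κ → (C_κ)¹₂`. -/
theorem onePoint_square_arrow (κ : Cardinal) (hκ : Cardinal.aleph0 ≤ κ)
    (α : Type*) [TopologicalSpace α] [DiscreteTopology α] (hcard : Cardinal.mk α = κ)
    (X₀ X₁ : Set (OnePoint α × OnePoint α)) (hpart : X₀ ∪ X₁ = Set.univ) :
    HasCopy (OnePoint α) X₀ ∨ HasCopy (OnePoint α) X₁ := by
  have : Infinite α := infinite_iff.2 (hcard ▸ hκ)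
  have h₀ : X₀ᶜ ⊆ X₁ := compl_subset_iff_union.2 hpart
  have h₁ : X₁ᶜ ⊆ X₀ := compl_subset_iff_union.2 (union_comm X₁ X₀ ▸ hpart)
  by_cases h : ((∞ : OnePoint α), (∞ : OnePoint α)) ∈ X₀
  · exact (hasCopy_or_hasCopy_compl h).imp id (·.mono h₀)
  · exact ((hasCopy_or_hasCopy_compl (h₀ h)).imp id (·.mono h₁)).symm
end

section
/- No homeomorphic embedding of β(ω) into ω* = β(ω) \ ω has a fixed point: if h : β(ω) → ω* is a topological embedding, then h(x) ≠ x for all x ∈ β(ω). -/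
/-!
Katětov: a map `g` without fixed points admits a 3-colouring with `c (g x) ≠ c x` (colour finite
pieces greedily, a vertex hit at most once having at most two neighbours, then pass to a limit by
compactness), so an ultrafilter fixed by `g` must contain `{x | g x = x}`.

Frolík: suppose an embedding `H` of `βℕ` into `ℕ*` fixes `p`. The points `u n = H (pure n)` form a
discrete set, so some `g : ℕ → ℕ` equals `n` on a set in `u n`. As `p` is the `p`-limit of the
`u n`, the map `g` pushes `p` forward to itself; by Katětov `g` fixes `p`-almost every point, which
forces `{n} ∈ u n` for some `n`, i.e. `H (pure n) = pure n` lies in `ℕ`.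
-/

open Filter Set Topology

theorem exists_three_coloring_on_finset {α : Type*} (g : α → α) (F : Finset α)
    (hg : ∀ x ∈ F, g x ≠ x) : ∃ c : α → Fin 3, ∀ x ∈ F, c (g x) ≠ c x := by
  classical
  induction F using Finset.strongInduction with
  | H F ih =>
  rcases F.eq_empty_or_nonempty with rfl | hF
  · exact ⟨fun _ => 0, by simp⟩
  -- some vertex of `F` is hit at most once, so it has at most two neighbours
  obtain ⟨v, hvF, hv⟩ := Finset.exists_card_fiber_le_of_card_le_mul (f := g) hF
    (s := F) (n := 1) (by rw [mul_one])
  have : Nonempty α := ⟨v⟩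
  obtain ⟨w, hw⟩ := Finset.card_le_one_iff_subset_singleton.mp hv
  obtain ⟨c, hc⟩ := ih (F.erase v) (Finset.erase_ssubset hvF)
    fun x hx => hg x (Finset.mem_of_mem_erase hx)
  obtain ⟨i, hi₁, hi₂⟩ : ∃ i : Fin 3, i ≠ c (g v) ∧ i ≠ c w := by
    generalize c (g v) = a; generalize c w = b; revert a b; decide
  refine ⟨Function.update c v i, fun x hxF => ?_⟩
  by_cases hxv : x = v
  · subst hxv
    simpa [Function.update_of_ne (hg x hxF)] using hi₁.symm
  by_cases hgxv : g x = v
  · have hxw : x = w := Finset.mem_singleton.mp (hw (by simp [hxF, hgxv]))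
    subst hxw
    simpa [hgxv, hxv] using hi₂
  · simpa [hgxv, hxv] using hc x (Finset.mem_erase.mpr ⟨hxv, hxF⟩)

theorem exists_three_coloring {α : Type*} (g : α → α) :
    ∃ c : α → Fin 3, ∀ x, g x ≠ x → c (g x) ≠ c x := by
  classical
  choose cs hcs using fun F : Finset α =>
    exists_three_coloring_on_finset g {x ∈ F | g x ≠ x} (by simp)
  obtain ⟨c, hc⟩ := exists_clusterPt_of_compactSpace (map cs atTop)
  refine ⟨c, fun x hx => ?_⟩
  have hnear : ∀ᶠ d in 𝓝 c, d x = c x ∧ d (g x) = c (g x) := by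
    have hcoord (y : α) : ∀ᶠ d in 𝓝 c, d y = c y :=
      (continuous_apply y).continuousAt.eventually_mem (isOpen_discrete {c y} |>.mem_nhds rfl)
    exact (hcoord x).and (hcoord (g x))
  obtain ⟨F, ⟨hFx, hFgx⟩, hxF⟩ :=
    ((MapClusterPt.frequently hc hnear).and_eventually (eventually_ge_atTop {x})).exists
  rw [← hFx, ← hFgx]
  exact hcs F x (by simpa [hx] using hxF)

namespace Ultrafilter

variable {α : Type*}

theorem eventually_apply_eq_self_of_map_eq {p : Ultrafilter α} {g : α → α} (hp : p.map g = p) :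
    ∀ᶠ x in p, g x = x := by
  obtain ⟨c, hc⟩ := exists_three_coloring g
  obtain ⟨i, hi⟩ := (p.map c).eq_pure_of_finite
  have hci : ∀ᶠ x in p, c x = i :=
    mem_map.mp (hi ▸ mem_pure.mpr (mem_singleton i))
  have hcgi : ∀ᶠ x in p, c (g x) = i := by
    rw [← hp] at hci
    exact hci
  filter_upwards [hci, hcgi] with x hx hgx
  by_contra hne
  exact hc x hne (hgx.trans hx.symm)

theorem mem_iff_eventually_mem_of_tendsto {p q : Ultrafilter α} {u : α → Ultrafilter α}
    (hu : Tendsto u p (𝓝 q)) (s : Set α) : s ∈ q ↔ ∀ᶠ a in p, s ∈ u a := by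
  rw [Tendsto, ← coe_map, ultrafilter_converges_iff] at hu
  rw [hu]
  rfl

theorem eq_pure_of_eventually_eq {f : Ultrafilter α} {a : α} (h : ∀ᶠ x in f, x = a) :
    f = pure a :=
  eq_of_le (Filter.le_pure_iff.mpr h)

theorem exists_eq_pure_of_tendsto_self {p : Ultrafilter α} {u : α → Ultrafilter α} {g : α → α}
    (hg : ∀ a, ∀ᶠ x in u a, g x = a) (hu : Tendsto u p (𝓝 p)) : ∃ a, u a = pure a := by
  have hpre (s : Set α) (a : α) : g ⁻¹' s ∈ u a ↔ a ∈ s := by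
    rw [← mem_map, show (u a).map g = pure a from eq_pure_of_eventually_eq (hg a), mem_pure]
  have hmap : p.map g = p := by
    ext s
    rw [mem_map, mem_iff_eventually_mem_of_tendsto hu (g ⁻¹' s)]
    simp only [hpre]
    rfl
  obtain ⟨a, ha⟩ := ((mem_iff_eventually_mem_of_tendsto hu _).mp
    (eventually_apply_eq_self_of_map_eq hmap)).exists
  refine ⟨a, eq_pure_of_eventually_eq ?_⟩
  filter_upwards [ha, hg a] with x hfix hxa
  exact hfix.symm.trans hxa

theorem isEmbedding_pure [TopologicalSpace α] [DiscreteTopology α] :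
    IsEmbedding (pure : α → Ultrafilter α) :=
  ⟨⟨(induced_topology_pure.trans DiscreteTopology.eq_bot.symm).symm⟩, pure_injective⟩

theorem exists_mem_forall_mem_imp_eq_of_isEmbedding {ι : Type*} [TopologicalSpace ι]
    [DiscreteTopology ι] {u : ι → Ultrafilter α} (hu : IsEmbedding u) (i : ι) :
    ∃ s ∈ u i, ∀ j, s ∈ u j → j = i := by
  obtain ⟨V, hVopen, hV⟩ := isOpen_induced_iff.mp (hu.eq_induced ▸ isOpen_discrete {i})
  have hiV : u i ∈ V := show i ∈ u ⁻¹' V by rw [hV]; rfl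
  obtain ⟨_, ⟨s, rfl⟩, hs, hsV⟩ :=
    ultrafilterBasis_is_basis.exists_subset_of_mem_open hiV hVopen
  exact ⟨s, hs, fun j hj => by simpa [hV] using (show j ∈ u ⁻¹' V from hsV hj)⟩

theorem exists_eventually_eq_of_isEmbedding {u : ℕ → Ultrafilter α} (hu : IsEmbedding u) :
    ∃ g : α → ℕ, ∀ n, ∀ᶠ x in u n, g x = n := by
  classical
  choose s hs hsu using exists_mem_forall_mem_imp_eq_of_isEmbedding hu
  refine ⟨fun x => if h : ∃ n, x ∈ s n then Nat.find h else 0, fun n => ?_⟩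
  have hlow : ∀ᶠ x in u n, ∀ k < n, x ∉ s k :=
    (eventually_all_finite (finite_Iio n)).mpr fun k hk =>
      compl_mem_iff_notMem.mpr fun h => hk.ne (hsu k n h).symm
  filter_upwards [hs n, hlow] with x hx hxk
  rw [dif_pos ⟨n, hx⟩, Nat.find_eq_iff]
  exact ⟨hx, hxk⟩

theorem exists_apply_pure_eq_pure_of_isEmbedding {H : Ultrafilter ℕ → Ultrafilter ℕ}
    (hH : IsEmbedding H) {p : Ultrafilter ℕ} (hp : H p = p) : ∃ n, H (pure n) = pure n := by
  obtain ⟨g, hg⟩ := exists_eventually_eq_of_isEmbedding (hH.comp isEmbedding_pure)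
  refine exists_eq_pure_of_tendsto_self (p := p) hg ?_
  have hlim := (hH.continuous.tendsto p).comp (tendsto_pure_self p)
  rwa [hp] at hlim

end Ultrafilter

section

variable (α : Type*) [TopologicalSpace α] [DiscreteTopology α]

noncomputable def stoneCechHomeomorphUltrafilter : StoneCech α ≃ₜ Ultrafilter α where
  toFun := stoneCechExtend (continuous_of_discreteTopology (f := pure))
  invFun := Ultrafilter.extend stoneCechUnit
  left_inv := congrFun <| stoneCech_hom_ext
    ((continuous_ultrafilter_extend _).comp (continuous_stoneCechExtend _)) continuous_id <|
    funext fun a => by simp [ultrafilter_extend_pure]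
  right_inv := congrFun <| denseRange_pure.equalizer
    ((continuous_stoneCechExtend _).comp (continuous_ultrafilter_extend _)) continuous_id <|
    funext fun a => by simp [ultrafilter_extend_pure]
  continuous_toFun := continuous_stoneCechExtend _
  continuous_invFun := continuous_ultrafilter_extend _

variable {α}

@[simp]
theorem stoneCechHomeomorphUltrafilter_symm_pure (a : α) :
    (stoneCechHomeomorphUltrafilter α).symm (pure a) = stoneCechUnit a :=
  ultrafilter_extend_pure _ a

end

/-- The Katětov–Frolík fixed-point theorem: no homeomorphic embedding of `β(ω)` into
`ω* = β(ω) \ ω` has a fixed point. -/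
theorem no_fixed_point_of_embedding_into_remainder (h : StoneCech ℕ → StoneCech ℕ)
    (hemb : Topology.IsEmbedding h)
    (hrange : ∀ x, h x ∉ Set.range (stoneCechUnit : ℕ → StoneCech ℕ)) :
    ∀ x, h x ≠ x := by
  intro x hx
  let e := stoneCechHomeomorphUltrafilter ℕ
  obtain ⟨n, hn⟩ := Ultrafilter.exists_apply_pure_eq_pure_of_isEmbedding
    (e.isEmbedding.comp (hemb.comp e.symm.isEmbedding)) (p := e x) (by simp [hx])
  refine hrange (e.symm (pure n)) ⟨n, ?_⟩
  rw [← stoneCechHomeomorphUltrafilter_symm_pure]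
  exact (e.eq_symm_apply.mpr hn).symm
end

section
/- For each p ∈ ω*, the family of sets X ⊆ ω* satisfying X = X^p is the family of closed sets of a topology 𝒯(p) on ω*. That is: ∅^p = ∅, (ω*)^p = ω*, (X₀ ∪ X₁)^p = X₀ ∪ X₁ whenever Xᵢ = Xᵢ^p for i = 0,1, and arbitrary intersections of sets X with X = X^p again satisfy this equation. -/
open Topology


/-- The Stone–Čech remainder `ω* = β(ω) \ ω`. -/
def omegaStar : Set (StoneCech ℕ) := (Set.range (stoneCechUnit : ℕ → StoneCech ℕ))ᶜ

/-- The Stone extension `f̄ : β(ω) → β(ω)` of a map `f : ω → β(ω)`. -/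
noncomputable def stoneExt (f : ℕ → StoneCech ℕ) : StoneCech ℕ → StoneCech ℕ :=
  stoneCechExtend (continuous_of_discreteTopology (f := f))

/-- `pOp p X = X^p`: the set `X` together with all its `p`-limits `f̄(p)` through countable
discrete subsets `f[ω] ⊆ X` (with `f : ω ≈ f[ω]`, i.e. `f` injective with discrete range). -/
def pOp (p : StoneCech ℕ) (X : Set (StoneCech ℕ)) : Set (StoneCech ℕ) :=
  X ∪ {y | ∃ f : ℕ → StoneCech ℕ, Function.Injective f ∧ Set.range f ⊆ X ∧
    DiscreteTopology (Set.range f) ∧ stoneExt f p = y}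

/-- The canonical map `β(ω) → Ultrafilter ℕ` (inverse of the ultrafilter description). -/
noncomputable def toUlt : StoneCech ℕ → Ultrafilter ℕ :=
  stoneCechExtend (continuous_of_discreteTopology (f := (pure : ℕ → Ultrafilter ℕ)))

lemma toUlt_continuous : Continuous toUlt := continuous_stoneCechExtend _

lemma toUlt_unit (n : ℕ) : toUlt (stoneCechUnit n) = pure n :=
  congrFun (stoneCechExtend_extends _) n

lemma ofUlt_toUlt (x : StoneCech ℕ) :
    Ultrafilter.extend (stoneCechUnit : ℕ → StoneCech ℕ) (toUlt x) = x := by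
  have h : (Ultrafilter.extend (stoneCechUnit : ℕ → StoneCech ℕ)) ∘ toUlt = id := by
    apply stoneCech_hom_ext ((continuous_ultrafilter_extend _).comp toUlt_continuous)
      continuous_id
    funext n
    simp only [Function.comp_apply, toUlt_unit, id_eq]
    exact congrFun (ultrafilter_extend_extends (stoneCechUnit : ℕ → StoneCech ℕ)) n
  exact congrFun h x

lemma stoneExt_eq (f : ℕ → StoneCech ℕ) :
    stoneExt f = Ultrafilter.extend f ∘ toUlt := by
  apply stoneCech_hom_ext (continuous_stoneCechExtend _)
    ((continuous_ultrafilter_extend _).comp toUlt_continuous)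
  funext n
  simp only [Function.comp_apply, toUlt_unit]
  exact (congrFun (stoneCechExtend_extends (continuous_of_discreteTopology (f := f))) n).trans
    (congrFun (ultrafilter_extend_extends f) n).symm

lemma infinite_of_mem_toUlt {p : StoneCech ℕ} (hp : p ∈ omegaStar) {S : Set ℕ}
    (hS : S ∈ toUlt p) : S.Infinite := by
  by_contra hfin
  rw [Set.not_infinite] at hfin
  obtain ⟨n, -, hn⟩ := Ultrafilter.eq_pure_of_finite_mem hfin hS
  have h2 := ofUlt_toUlt p
  rw [hn] at h2
  rw [show Ultrafilter.extend (stoneCechUnit : ℕ → StoneCech ℕ) (pure n) = stoneCechUnit n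
    from congrFun (ultrafilter_extend_extends _) n] at h2
  exact hp ⟨n, h2⟩

lemma isOpen_singleton_unit (n : ℕ) : IsOpen ({stoneCechUnit n} : Set (StoneCech ℕ)) := by
  have hset : ({stoneCechUnit n} : Set (StoneCech ℕ))
      = toUlt ⁻¹' {F : Ultrafilter ℕ | ({n} : Set ℕ) ∈ F} := by
    ext x
    simp only [Set.mem_singleton_iff, Set.mem_preimage, Set.mem_setOf_eq]
    constructor
    · rintro rfl
      rw [toUlt_unit]
      exact Filter.mem_pure.mpr rfl
    · intro hx
      obtain ⟨m, hm, hx'⟩ := Ultrafilter.eq_pure_of_finite_mem (Set.finite_singleton n) hx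
      rcases hm with rfl
      have h2 := ofUlt_toUlt x
      rw [hx'] at h2
      rw [show Ultrafilter.extend (stoneCechUnit : ℕ → StoneCech ℕ) (pure m) = stoneCechUnit m
        from congrFun (ultrafilter_extend_extends _) m] at h2
      exact h2.symm
  rw [hset]
  exact (ultrafilter_isOpen_basic {n}).preimage toUlt_continuous

lemma key_lemma (p : StoneCech ℕ) (hp : p ∈ omegaStar) (X : Set (StoneCech ℕ))
    (f : ℕ → StoneCech ℕ) (hinj : Function.Injective f)
    (hd : DiscreteTopology (Set.range f)) (hS : {n | f n ∈ X} ∈ toUlt p) :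
    stoneExt f p ∈ pOp p X := by
  classical
  set S : Set ℕ := {n | f n ∈ X} with hSdef
  have hSinf : S.Infinite := infinite_of_mem_toUlt hp hS
  set e : ℕ ↪ S := hSinf.natEmbedding with he
  set T : Set ℕ := Set.range (fun k => (e (2 * k) : ℕ)) with hT
  have hTS : T ⊆ S := by rintro _ ⟨k, rfl⟩; exact (e (2 * k)).2
  have hinj_even : Function.Injective (fun k : ℕ => (e (2 * k) : ℕ)) := by
    intro a b hab
    have := e.injective (Subtype.coe_injective hab)
    omega
  have hinj_odd : Function.Injective (fun k : ℕ => (e (2 * k + 1) : ℕ)) := by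
    intro a b hab
    have := e.injective (Subtype.coe_injective hab)
    omega
  have hSTinf : (S \ T).Infinite := by
    apply Set.infinite_of_injective_forall_mem hinj_odd
    intro k
    refine ⟨(e (2 * k + 1)).2, ?_⟩
    rintro ⟨m, hm⟩
    have := e.injective (Subtype.coe_injective hm)
    omega
  have hTinf : T.Infinite := by
    apply Set.infinite_of_injective_forall_mem hinj_even
    intro k
    exact ⟨k, rfl⟩
  -- choose B ∈ toUlt p with B ⊆ S and (S \ B) infinite
  obtain ⟨B, hB, hBS, hBinf⟩ : ∃ B : Set ℕ, B ∈ toUlt p ∧ B ⊆ S ∧ (S \ B).Infinite := by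
    rcases (toUlt p).mem_or_compl_mem T with hT' | hT'
    · exact ⟨T, hT', hTS, hSTinf⟩
    · refine ⟨S \ T, ?_, Set.diff_subset, ?_⟩
      · have : S ∩ Tᶜ ∈ toUlt p := Filter.inter_mem hS hT'
        simpa [Set.diff_eq] using this
      · apply hTinf.mono
        intro x hx
        rcases hx with ⟨k, rfl⟩
        exact ⟨(e (2 * k)).2, fun hc => hc.2 ⟨k, rfl⟩⟩
  set e2 : ℕ ↪ (S \ B : Set ℕ) := hBinf.natEmbedding with he2
  set h : ℕ → ℕ := fun n => if n ∈ B then n else (e2 n : ℕ) with hh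
  have hmemS : ∀ n, h n ∈ S := by
    intro n
    by_cases hn : n ∈ B
    · simp only [hh, if_pos hn]; exact hBS hn
    · simp only [hh, if_neg hn]; exact (e2 n).2.1
  have hhinj : Function.Injective h := by
    intro a b hab
    simp only [hh] at hab
    by_cases ha : a ∈ B <;> by_cases hb : b ∈ B
    · rwa [if_pos ha, if_pos hb] at hab
    · rw [if_pos ha, if_neg hb] at hab
      rw [hab] at ha
      exact absurd ha (e2 b).2.2
    · rw [if_neg ha, if_pos hb] at hab
      rw [← hab] at hb
      exact absurd hb (e2 a).2.2
    · rw [if_neg ha, if_neg hb] at hab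
      exact e2.injective (Subtype.coe_injective hab)
  refine Or.inr ⟨f ∘ h, hinj.comp hhinj, ?_, ?_, ?_⟩
  · rintro _ ⟨n, rfl⟩
    exact hmemS n
  · exact DiscreteTopology.of_subset hd (Set.range_comp_subset_range h f)
  · rw [stoneExt_eq (f ∘ h), stoneExt_eq f, Function.comp_apply, Function.comp_apply]
    have hy : ((toUlt p).map f : Filter (StoneCech ℕ)) ≤ 𝓝 (Ultrafilter.extend f (toUlt p)) :=
      ultrafilter_extend_eq_iff.mp rfl
    apply ultrafilter_extend_eq_iff.mpr
    have hcong : Filter.map (f ∘ h) (toUlt p : Filter ℕ) = Filter.map f (toUlt p : Filter ℕ) := by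
      apply Filter.map_congr
      filter_upwards [hB] with n hn
      simp [hh, if_pos hn]
    rw [Ultrafilter.coe_map, hcong, ← Ultrafilter.coe_map]
    exact hy

/-- Lemma 5.1: for `p ∈ ω*`, the sets `X ⊆ ω*` with `X = X^p` are the closed sets of a
topology `𝒯(p)` on `ω*`: `∅^p = ∅`, `(ω*)^p = ω*`, a union of two fixed sets is fixed,
and arbitrary intersections of fixed sets are fixed. -/
theorem pOp_closed_sets_topology (p : StoneCech ℕ) (hp : p ∈ omegaStar) :
    pOp p ∅ = ∅ ∧
    pOp p omegaStar = omegaStar ∧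
    (∀ X₀ X₁ : Set (StoneCech ℕ), X₀ ⊆ omegaStar → X₁ ⊆ omegaStar →
      pOp p X₀ = X₀ → pOp p X₁ = X₁ → pOp p (X₀ ∪ X₁) = X₀ ∪ X₁) ∧
    (∀ S : Set (Set (StoneCech ℕ)), (∀ X ∈ S, X ⊆ omegaStar ∧ pOp p X = X) →
      pOp p (⋂₀ S) = ⋂₀ S) := by
  refine ⟨?_, ?_, ?_, ?_⟩
  · -- empty set
    apply Set.eq_empty_iff_forall_notMem.mpr
    rintro y (hy | ⟨f, -, hr, -, -⟩)
    · exact hy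
    · exact hr ⟨0, rfl⟩
  · -- omegaStar
    apply Set.Subset.antisymm
    · rintro y (hy | ⟨f, hinj, hr, hd, rfl⟩)
      · exact hy
      · rintro ⟨n, hn⟩
        have hle : ((toUlt p).map f : Filter (StoneCech ℕ)) ≤ 𝓝 (stoneCechUnit n) := by
          have := ultrafilter_extend_eq_iff.mp
            (show Ultrafilter.extend f (toUlt p) = stoneCechUnit n by
              rw [← Function.comp_apply (f := Ultrafilter.extend f), ← stoneExt_eq]
              exact hn.symm)
          exact this
        have hmem : ({stoneCechUnit n} : Set (StoneCech ℕ)) ∈ (toUlt p).map f :=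
          hle ((isOpen_singleton_unit n).mem_nhds rfl)
        rw [Ultrafilter.mem_map] at hmem
        obtain ⟨m, hm⟩ := (toUlt p).nonempty_of_mem hmem
        exact hr ⟨m, rfl⟩ ⟨n, hm.symm⟩
    · exact Set.subset_union_left
  · -- binary union
    intro X₀ X₁ h₀ h₁ hX₀ hX₁
    apply Set.Subset.antisymm _ Set.subset_union_left
    rintro y (hy | ⟨f, hinj, hr, hd, rfl⟩)
    · exact hy
    · rcases (toUlt p).mem_or_compl_mem {n | f n ∈ X₀} with hA | hA
      · exact Or.inl (hX₀ ▸ key_lemma p hp X₀ f hinj hd hA)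
      · have hA' : {n | f n ∈ X₁} ∈ toUlt p := by
          apply Filter.mem_of_superset hA
          intro n hn
          rcases hr ⟨n, rfl⟩ with h | h
          · exact absurd h hn
          · exact h
        exact Or.inr (hX₁ ▸ key_lemma p hp X₁ f hinj hd hA')
  · -- intersections
    intro S hSfam
    apply Set.Subset.antisymm _ Set.subset_union_left
    rintro y (hy | ⟨f, hinj, hr, hd, rfl⟩)
    · exact hy
    · intro X hX
      rw [← (hSfam X hX).2]
      exact Or.inr ⟨f, hinj, fun z hz => (hr hz) X hX, hd, rfl⟩
end

section
/- Let p ∈ ω* and let 𝒯(p) be the topology on ω* whose closed sets are the X with X = X^p. If X ⊆ ω* is 𝒯(p)-open, then X^p is also 𝒯(p)-open. -/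
/-- `X` is `𝒯(p)`-open: `X ⊆ ω*` and its complement in `ω*` is `𝒯(p)`-closed,
i.e. fixed by the operator `X ↦ X^p`. -/
def TpOpen (p : StoneCech ℕ) (X : Set (StoneCech ℕ)) : Prop :=
  X ⊆ omegaStar ∧ pOp p (omegaStar \ X) = omegaStar \ X

/-!
Identify `β(ω)` with the ultrafilters on `ω`; then `f̄(p)` becomes the ultrafilter sum
`p.bind (f ·)`. A countable discrete set `{f n}` is separated by a map `a : ω → ω` whose `n`-th
fibre belongs to `f n`. For two disjoint such families `F`, `G`, separated by `a` and `b`, the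
`p`-sums differ. Split according to whether, for `p`-many `n`, `F n` lives on one fibre of `b`,
and symmetrically for `G`. If neither does, both `a < b` and `b < a` hold almost everywhere for
the common sum. If only `G` does, the induced map `k` between fibre indices fixes `p` and
decreases `p`-almost everywhere, which a parity argument rules out. If both do, the two fibre
correspondences are mutually inverse `p`-almost everywhere, and sets chosen in `F n \ G m`
for corresponding `n`, `m` separate the two sums.

If `X` is `𝒯(p)`-open, a `p`-limit `f̄(p)` of a discrete sequence in `ω* \ X^p` lies outside `X`
because `ω* \ X` is `𝒯(p)`-closed, and by the above it is not a `p`-limit of a discrete sequence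
in `X`; so `ω* \ X^p` is `𝒯(p)`-closed too.
-/

open Filter Set Function

theorem Filter.Eventually.exists_fun {ι γ : Type*} [Nonempty γ] {l : Filter ι}
    {P : ι → γ → Prop} (h : ∀ᶠ i in l, ∃ c, P i c) : ∃ k : ι → γ, ∀ᶠ i in l, P i (k i) := by
  classical
  refine ⟨fun i => if hi : ∃ c, P i c then hi.choose else Classical.arbitrary γ, ?_⟩
  filter_upwards [h] with i hi
  simpa only [dif_pos hi] using hi.choose_spec

namespace Ultrafilter

variable {ι α β : Type*}

theorem mem_bind {u : Ultrafilter α} {F : α → Ultrafilter β} {s : Set β} :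
    s ∈ u.bind F ↔ {x | s ∈ F x} ∈ u :=
  Filter.mem_bind'

theorem pure_bind (x : α) (F : α → Ultrafilter β) : (pure x : Ultrafilter α).bind F = F x :=
  coe_injective (Filter.pure_bind x _)

theorem exists_mem_notMem_of_ne {u v : Ultrafilter α} (h : u ≠ v) : ∃ s ∈ u, s ∉ v := by
  by_contra! hle
  exact h (eq_of_le hle).symm

theorem map_congr {f g : α → β} {u : Ultrafilter α} (h : f =ᶠ[u] g) : u.map f = u.map g :=
  coe_injective <| by simp only [coe_map, Filter.map_congr h]

theorem continuous_bind (F : α → Ultrafilter β) :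
    Continuous fun u : Ultrafilter α => u.bind F :=
  ultrafilterBasis_is_basis.continuous_iff.2 <| by
    rintro _ ⟨s, rfl⟩
    exact ultrafilter_isOpen_basic {a | s ∈ F a}

theorem bind_ne_pure {u : Ultrafilter α} {F : α → Ultrafilter β} (hF : ∀ x b, F x ≠ pure b)
    (b : β) : u.bind F ≠ pure b := by
  intro h
  have : {x | {b} ∈ F x} ∈ u := mem_bind.1 (h ▸ mem_pure.2 rfl)
  obtain ⟨x, hx⟩ := u.nonempty_of_mem this
  obtain ⟨c, hc, hFc⟩ := eq_pure_of_finite_mem (finite_singleton b) hx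
  exact hF x b (mem_singleton_iff.1 hc ▸ hFc)

theorem exists_mem_forall_mem_imp_eq {u : ι → Ultrafilter β} [DiscreteTopology (range u)]
    (i : ι) : ∃ S ∈ u i, ∀ j, S ∈ u j → u j = u i := by
  obtain ⟨V, hV, hVi⟩ := isOpen_induced_iff.1 (isOpen_discrete {(⟨u i, i, rfl⟩ : range u)})
  have hi : (⟨u i, i, rfl⟩ : range u) ∈ Subtype.val ⁻¹' V := hVi ▸ rfl
  obtain ⟨_, ⟨S, rfl⟩, hiS, hSV⟩ := ultrafilterBasis_is_basis.exists_subset_of_mem_open hi hV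
  refine ⟨S, hiS, fun j hj => ?_⟩
  have hj' : (⟨u j, j, rfl⟩ : range u) ∈ Subtype.val ⁻¹' V := hSV hj
  rw [hVi, mem_singleton_iff] at hj'
  exact congrArg Subtype.val hj'

theorem exists_fibers_of_separating {u : ℕ → Ultrafilter β} {S : ℕ → Set β}
    (hS : ∀ n, S n ∈ u n) (hS' : ∀ j n, j < n → S j ∉ u n) :
    ∃ a : β → ℕ, ∀ n, a ⁻¹' {n} ∈ u n := by
  classical
  refine ⟨fun x => if hx : ∃ n, x ∈ S n then Nat.find hx else 0, fun n => ?_⟩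
  have hfirst : S n ∩ ⋂ j ∈ Iio n, (S j)ᶜ ∈ u n :=
    inter_mem (hS n) <| (biInter_mem (finite_Iio n)).2 fun j hj =>
      compl_mem_iff_notMem.2 (hS' j n hj)
  refine mem_of_superset hfirst fun x ⟨hxn, hxj⟩ => ?_
  have hx : ∃ n, x ∈ S n := ⟨n, hxn⟩
  simp only [mem_preimage, mem_singleton_iff, dif_pos hx]
  exact (Nat.find_eq_iff hx).2 ⟨hxn, fun j hj => mem_iInter₂.1 hxj j hj⟩

theorem exists_fibers_of_injective {u : ℕ → Ultrafilter β} (hu : Injective u)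
    [DiscreteTopology (range u)] : ∃ a : β → ℕ, ∀ n, a ⁻¹' {n} ∈ u n := by
  choose S hS hS' using exists_mem_forall_mem_imp_eq (u := u)
  exact exists_fibers_of_separating hS fun j n hjn hn => hjn.ne (hu (hS' j n hn)).symm

variable {p : Ultrafilter ℕ} {F G : ℕ → Ultrafilter β} {a b : β → ℕ}

theorem map_bind_of_fibers (hF : ∀ n, a ⁻¹' {n} ∈ F n) : (p.bind F).map a = p := by
  refine Ultrafilter.ext fun s => ?_
  rw [mem_map, mem_bind]
  suffices {n | a ⁻¹' s ∈ F n} = s by rw [this]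
  ext n
  refine ⟨fun hs => ?_, fun hn => mem_of_superset (hF n) fun x hx => ?_⟩
  · obtain ⟨x, hxs, hxn⟩ := (F n).nonempty_of_mem (inter_mem hs (hF n))
    rwa [← mem_singleton_iff.1 hxn]
  · rwa [mem_preimage, mem_singleton_iff.1 hx]

theorem eventually_lt_of_forall_fiber_notMem {u : Ultrafilter β} (h : ¬∃ j, b ⁻¹' {j} ∈ u)
    (c : ℕ) : ∀ᶠ x in u, c < b x := by
  by_contra hc
  have hle : ∀ᶠ x in u, b x ≤ c := by
    simpa only [← eventually_not, not_lt] using hc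
  obtain ⟨j, -, hj⟩ := eq_pure_of_finite_mem (finite_Iic c) (mem_map.2 hle)
  exact h ⟨j, mem_map.1 (hj ▸ mem_pure.2 rfl)⟩

theorem eventually_lt_of_not_concentrated (hF : ∀ n, a ⁻¹' {n} ∈ F n)
    (h : ∀ᶠ n in p, ¬∃ j, b ⁻¹' {j} ∈ F n) : ∀ᶠ x in p.bind F, a x < b x :=
  mem_bind.2 <| h.mono fun n hn => by
    filter_upwards [hF n, eventually_lt_of_forall_fiber_notMem hn n] with x hx hlt
    rwa [mem_singleton_iff.1 hx]

theorem eventually_eq_comp_of_concentrated (hG : ∀ m, b ⁻¹' {m} ∈ G m) {k : ℕ → ℕ}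
    (hk : ∀ᶠ m in p, a ⁻¹' {k m} ∈ G m) : ∀ᶠ x in p.bind G, a x = k (b x) :=
  mem_bind.2 <| hk.mono fun m hm => by
    filter_upwards [hm, hG m] with x hxa hxb
    rw [mem_singleton_iff.1 hxa, mem_singleton_iff.1 hxb]

def descentLength (k : ℕ → ℕ) (m : ℕ) : ℕ :=
  if k m < m then descentLength k (k m) + 1 else 0
termination_by m

theorem descentLength_of_lt {k : ℕ → ℕ} {m : ℕ} (h : k m < m) :
    descentLength k m = descentLength k (k m) + 1 := by
  rw [descentLength, if_pos h]

/-- A special case of Katětov's theorem. The parity of `descentLength k` flips along `k`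
wherever `k` decreases, so `k` cannot fix `p`. -/
theorem not_eventually_lt_of_map_eq_self {k : ℕ → ℕ} (hk : p.map k = p) :
    ¬∀ᶠ m in p, k m < m := by
  intro hlt
  have hflip : ∀ᶠ m in p, (Even (descentLength k (k m)) ↔ ¬Even (descentLength k m)) :=
    hlt.mono fun m hm => by rw [descentLength_of_lt hm, Nat.even_add_one, not_not]
  have hmap := mem_map (m := k) (f := p) (s := {m | Even (descentLength k m)})
  rw [hk] at hmap
  exact iff_not_self (hmap.trans ((eventually_congr hflip).trans eventually_not))

theorem bind_ne_bind_of_not_concentrated (hF : ∀ n, a ⁻¹' {n} ∈ F n)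
    (hG : ∀ m, b ⁻¹' {m} ∈ G m) (hFb : ∀ᶠ n in p, ¬∃ j, b ⁻¹' {j} ∈ F n)
    (hGa : ∀ᶠ m in p, ¬∃ j, a ⁻¹' {j} ∈ G m) : p.bind F ≠ p.bind G := by
  intro hq
  have hab := eventually_lt_of_not_concentrated hF hFb
  have hba := eventually_lt_of_not_concentrated hG hGa
  rw [hq] at hab
  obtain ⟨x, hlt, hgt⟩ := (hab.and hba).exists
  exact lt_asymm hlt hgt

theorem bind_ne_bind_of_not_concentrated_of_concentrated (hF : ∀ n, a ⁻¹' {n} ∈ F n)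
    (hG : ∀ m, b ⁻¹' {m} ∈ G m) (hFb : ∀ᶠ n in p, ¬∃ j, b ⁻¹' {j} ∈ F n) {k : ℕ → ℕ}
    (hk : ∀ᶠ m in p, a ⁻¹' {k m} ∈ G m) : p.bind F ≠ p.bind G := by
  intro hq
  have hab := eventually_lt_of_not_concentrated hF hFb
  have hak := eventually_eq_comp_of_concentrated hG hk
  rw [hq] at hab
  have hkp : p.map k = p := calc
    p.map k = ((p.bind G).map b).map k := by rw [map_bind_of_fibers hG]
    _ = (p.bind G).map a := by rw [map_map]; exact (map_congr hak).symm
    _ = p := by rw [← hq, map_bind_of_fibers hF]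
  refine not_eventually_lt_of_map_eq_self hkp ?_
  rw [← map_bind_of_fibers hG (p := p), coe_map, Filter.eventually_map]
  filter_upwards [hab, hak] with x hlt heq
  rwa [← heq]

theorem bind_ne_bind_of_concentrated (hF : ∀ n, a ⁻¹' {n} ∈ F n) (hG : ∀ m, b ⁻¹' {m} ∈ G m)
    (hFG : ∀ n m, F n ≠ G m) {h k : ℕ → ℕ} (hh : ∀ᶠ n in p, b ⁻¹' {h n} ∈ F n)
    (hk : ∀ᶠ m in p, a ⁻¹' {k m} ∈ G m) : p.bind F ≠ p.bind G := by
  intro hq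
  have hkh : ∀ᶠ m in p, h (k m) = m := by
    have hbh := eventually_eq_comp_of_concentrated hF hh
    have hak := eventually_eq_comp_of_concentrated hG hk
    rw [hq] at hbh
    rw [← map_bind_of_fibers hG (p := p), coe_map, Filter.eventually_map]
    filter_upwards [hbh, hak] with x hb ha
    rw [← ha, hb]
  choose E hEF hEG using fun n => exists_mem_notMem_of_ne (hFG n (h n))
  have hmem : {x | x ∈ E (a x)} ∈ p.bind F :=
    mem_bind.2 <| univ_mem' fun n => by
      filter_upwards [hF n, hEF n] with x hx hxE
      rwa [mem_singleton_iff.1 hx]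
  have hnotMem : {x | x ∉ E (a x)} ∈ p.bind G :=
    mem_bind.2 <| by
      filter_upwards [hkh, hk] with m hm hmk
      filter_upwards [hmk, compl_mem_iff_notMem.2 (hm ▸ hEG (k m))] with x hx hxE
      rwa [mem_singleton_iff.1 hx]
  rw [hq] at hmem
  obtain ⟨x, hx, hx'⟩ := (p.bind G).nonempty_of_mem (inter_mem hmem hnotMem)
  exact hx' hx

theorem bind_ne_bind_of_fibers (hF : ∀ n, a ⁻¹' {n} ∈ F n) (hG : ∀ m, b ⁻¹' {m} ∈ G m)
    (hFG : ∀ n m, F n ≠ G m) : p.bind F ≠ p.bind G := by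
  by_cases hFb : ∀ᶠ n in p, ∃ j, b ⁻¹' {j} ∈ F n <;>
    by_cases hGa : ∀ᶠ m in p, ∃ j, a ⁻¹' {j} ∈ G m
  · obtain ⟨h, hh⟩ := hFb.exists_fun
    obtain ⟨k, hk⟩ := hGa.exists_fun
    exact bind_ne_bind_of_concentrated hF hG hFG hh hk
  · obtain ⟨h, hh⟩ := hFb.exists_fun
    exact (bind_ne_bind_of_not_concentrated_of_concentrated hG hF (eventually_not.2 hGa)
      hh).symm
  · obtain ⟨k, hk⟩ := hGa.exists_fun
    exact bind_ne_bind_of_not_concentrated_of_concentrated hF hG (eventually_not.2 hFb) hk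
  · exact bind_ne_bind_of_not_concentrated hF hG (eventually_not.2 hFb) (eventually_not.2 hGa)

end Ultrafilter

theorem Homeomorph.discreteTopology_range_comp {X Y ι : Type*} [TopologicalSpace X]
    [TopologicalSpace Y] (e : X ≃ₜ Y) (f : ι → X) [DiscreteTopology (range f)] :
    DiscreteTopology (range (e ∘ f)) := by
  rw [range_comp]
  exact (e.image _).discreteTopology

section

variable {α : Type*} [TopologicalSpace α] [DiscreteTopology α]

noncomputable def StoneCech.ultrafilterHomeomorph : StoneCech α ≃ₜ Ultrafilter α where
  toFun := stoneCechExtend (continuous_of_discreteTopology (f := (pure : α → Ultrafilter α)))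
  invFun := Ultrafilter.extend stoneCechUnit
  left_inv := congrFun <| stoneCech_hom_ext
    ((continuous_ultrafilter_extend _).comp (continuous_stoneCechExtend _)) continuous_id <| by
      funext a; simp [stoneCechExtend_stoneCechUnit, ultrafilter_extend_pure]
  right_inv := congrFun <| denseRange_pure.equalizer
    ((continuous_stoneCechExtend _).comp (continuous_ultrafilter_extend _)) continuous_id <| by
      funext a; simp [stoneCechExtend_stoneCechUnit, ultrafilter_extend_pure]
  continuous_toFun := continuous_stoneCechExtend _
  continuous_invFun := continuous_ultrafilter_extend _

theorem StoneCech.ultrafilterHomeomorph_unit (a : α) :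
    ultrafilterHomeomorph (stoneCechUnit a) = pure a :=
  stoneCechExtend_stoneCechUnit continuous_of_discreteTopology a

end

open StoneCech

theorem ultrafilterHomeomorph_stoneExt (f : ℕ → StoneCech ℕ) (x : StoneCech ℕ) :
    ultrafilterHomeomorph (stoneExt f x) =
      (ultrafilterHomeomorph x).bind (ultrafilterHomeomorph ∘ f) := by
  refine congrFun (stoneCech_hom_ext (g₁ := ultrafilterHomeomorph ∘ stoneExt f)
    (ultrafilterHomeomorph.continuous.comp (continuous_stoneCechExtend _))
    ((Ultrafilter.continuous_bind _).comp ultrafilterHomeomorph.continuous) ?_) x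
  funext n
  simp [stoneExt, stoneCechExtend_stoneCechUnit, ultrafilterHomeomorph_unit,
    Ultrafilter.pure_bind]

theorem mem_omegaStar_iff {x : StoneCech ℕ} :
    x ∈ omegaStar ↔ ∀ n, ultrafilterHomeomorph x ≠ pure n := by
  simp [omegaStar, ← ultrafilterHomeomorph_unit, eq_comm]

theorem stoneExt_mem_omegaStar {f : ℕ → StoneCech ℕ} (hf : ∀ n, f n ∈ omegaStar)
    (p : StoneCech ℕ) : stoneExt f p ∈ omegaStar := by
  rw [mem_omegaStar_iff, ultrafilterHomeomorph_stoneExt]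
  exact Ultrafilter.bind_ne_pure fun n => mem_omegaStar_iff.1 (hf n)

theorem stoneExt_ne_stoneExt {f g : ℕ → StoneCech ℕ} (hf : Injective f) (hg : Injective g)
    [DiscreteTopology (range f)] [DiscreteTopology (range g)] (hfg : ∀ n m, f n ≠ g m)
    (p : StoneCech ℕ) : stoneExt f p ≠ stoneExt g p := by
  have := ultrafilterHomeomorph.discreteTopology_range_comp f
  have := ultrafilterHomeomorph.discreteTopology_range_comp g
  obtain ⟨a, ha⟩ := Ultrafilter.exists_fibers_of_injective (ultrafilterHomeomorph.injective.comp hf)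
  obtain ⟨b, hb⟩ := Ultrafilter.exists_fibers_of_injective (ultrafilterHomeomorph.injective.comp hg)
  rw [Ne, ← ultrafilterHomeomorph.injective.eq_iff, ultrafilterHomeomorph_stoneExt,
    ultrafilterHomeomorph_stoneExt]
  exact Ultrafilter.bind_ne_bind_of_fibers ha hb fun n m hnm =>
    hfg n m (ultrafilterHomeomorph.injective hnm)

theorem pOp_subset_omegaStar {X : Set (StoneCech ℕ)} (hX : X ⊆ omegaStar) (p : StoneCech ℕ) :
    pOp p X ⊆ omegaStar := by
  rintro _ (hy | ⟨f, -, hf, -, rfl⟩)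
  · exact hX hy
  · exact stoneExt_mem_omegaStar (fun n => hX (hf ⟨n, rfl⟩)) p

theorem TpOpen_pOp_general (p : StoneCech ℕ) (X : Set (StoneCech ℕ))
    (hX : TpOpen p X) : TpOpen p (pOp p X) := by
  obtain ⟨hXω, hXclosed⟩ := hX
  refine ⟨pOp_subset_omegaStar hXω p, subset_antisymm ?_ subset_union_left⟩
  rintro _ (hy | ⟨f, hfi, hfr, hfd, rfl⟩)
  · exact hy
  have hfX : range f ⊆ omegaStar \ X := hfr.trans (sdiff_subset_sdiff_right subset_union_left)
  have hyX : stoneExt f p ∈ omegaStar \ X := hXclosed ▸ Or.inr ⟨f, hfi, hfX, hfd, rfl⟩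
  refine ⟨hyX.1, ?_⟩
  rintro (hy | ⟨g, hgi, hgr, hgd, hgp⟩)
  · exact hyX.2 hy
  · refine stoneExt_ne_stoneExt hgi hfi (fun m n h => (hfr ⟨n, rfl⟩).2 ?_) p hgp
    exact h ▸ Or.inl (hgr ⟨m, rfl⟩)

/-- Corollary 5.7: if `X ⊆ ω*` is `𝒯(p)`-open, then so is `X^p`. -/
theorem TpOpen_pOp (p : StoneCech ℕ) (hp : p ∈ omegaStar) (X : Set (StoneCech ℕ))
    (hX : TpOpen p X) : TpOpen p (pOp p X) :=
  TpOpen_pOp_general p X hX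
end

section
/- Let p ∈ ω*, let X ⊆ ω* be 𝒯(p)-open, and let c : X → {0,1} be a coloring such that no subspace of X homeomorphic to ω ∪ {p} (with the subspace topology from β(ω)) is monochromatic. Then c extends to a coloring c̃ : X^p → {0,1} with no monochromatic copy of ω ∪ {p}. -/
/-- The subspace `ω ∪ {p}` of `β(ω)`. -/
def omegaP (p : StoneCech ℕ) : Set (StoneCech ℕ) :=
  Set.range stoneCechUnit ∪ {p}

/-!
Identify `β(ω)` with the space of ultrafilters on `ℕ`; then `f̄(p)` is the ultrafilter sum
`p.bind f`. A new point `x ∈ X^p \ X` is coloured `false` iff it is a `p`-limit of a discrete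
sequence of `true`-coloured points of `X`. Everything rests on Frolík's lemma: discrete sequences
with disjoint ranges have different `p`-limits. For ultrafilters, the maps `φ`, `ψ` reading off
the block index reduce it to the fact that a map `κ` with `κ m < m` for `p`-almost all `m` does
not fix `p`.

A monochromatic copy of `ω ∪ {p}` in `X^p` is a discrete sequence `g` together with `x = ḡ(p)`.
If `p`-almost all `g n` lie in `X`, then after reindexing `x` is a `p`-limit of points of `X` of
one colour: for `x ∈ X` this gives a monochromatic copy inside `X`, and for `x ∉ X` it clashes with
the colour of `x`. Otherwise `p`-almost all `g n` lie in the `𝒯(p)`-closed set `ω* \ X`, so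
`x ∉ X` is a `p`-limit both of `X` (as `x ∈ X^p`) and of `ω* \ X`.
-/

open Filter Topology Set Function

def descentLength (κ : ℕ → ℕ) (m : ℕ) : ℕ :=
  if κ m < m then descentLength κ (κ m) + 1 else 0
termination_by m

theorem descentLength_of_lt {κ : ℕ → ℕ} {m : ℕ} (h : κ m < m) :
    descentLength κ m = descentLength κ (κ m) + 1 := by
  rw [descentLength, if_pos h]

namespace Ultrafilter

variable {α β ι : Type*}

theorem mem_bind_s14 {p : Ultrafilter ι} {m : ι → Ultrafilter α} {s : Set α} :
    s ∈ p.bind m ↔ ∀ᶠ i in p, s ∈ m i :=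
  Iff.rfl

theorem bind_eq_of_tendsto {F : Ultrafilter ι} {h : ι → Ultrafilter α}
    {y : Ultrafilter α} (hy : Tendsto h F (𝓝 y)) : F.bind h = y :=
  coe_le_coe.1 fun s hs => hy ((ultrafilter_isOpen_basic s).mem_nhds hs)

theorem bind_congr {p : Ultrafilter ι} {m m' : ι → Ultrafilter α} (h : ∀ᶠ i in p, m i = m' i) :
    p.bind m = p.bind m' :=
  Ultrafilter.ext fun _ => by
    simp only [mem_bind_s14]
    exact eventually_congr (h.mono fun _ hi => by rw [hi])

theorem eventually_comp_of_map_eq {p : Ultrafilter ι} {κ : ι → ι} (hκ : p.map κ = p)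
    {Q : ι → Prop} (hQ : ∀ᶠ i in p, Q i) : ∀ᶠ i in p, Q (κ i) := by
  rw [← hκ] at hQ
  exact hQ

/-- Colouring `m` by the parity of its descent length separates `m` from `κ m`. -/
theorem map_ne_self_of_eventually_lt {p : Ultrafilter ℕ} {κ : ℕ → ℕ} (h : ∀ᶠ m in p, κ m < m) :
    p.map κ ≠ p := by
  intro hκ
  set P : ℕ → Prop := fun m => Even (descentLength κ m)
  have flip : ∀ m, κ m < m → (P m ↔ ¬ P (κ m)) := fun m hm => by
    simp only [P, descentLength_of_lt hm, Nat.even_add_one]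
  have witness : ∀ {Q : ℕ → Prop}, (∀ᶠ m in p, Q m) → ∃ m, Q m ∧ Q (κ m) ∧ κ m < m :=
    fun hQ => (hQ.and ((eventually_comp_of_map_eq hκ hQ).and h)).exists
  rcases Ultrafilter.eventually_or.1 (Eventually.of_forall fun m => em (P m)) with hP | hP
  · obtain ⟨m, hm, hκm, hlt⟩ := witness hP
    exact (flip m hlt).1 hm hκm
  · obtain ⟨m, hm, hκm, hlt⟩ := witness hP
    exact hm ((flip m hlt).2 hκm)

theorem map_eq_pure_iff {u : Ultrafilter α} {φ : α → β} {b : β} :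
    u.map φ = pure b ↔ ∀ᶠ t in u, φ t = b := by
  rw [← coe_le_coe, coe_map, coe_pure]
  exact tendsto_pure

variable {p : Ultrafilter ℕ} {d a : ℕ → Ultrafilter α} {φ ψ : α → ℕ}

theorem map_bind_eq_self (hφ : ∀ n, ∀ᶠ t in d n, φ t = n) : (p.bind d).map φ = p := by
  change p.bind (fun n => (d n).map φ) = p
  simp only [map_eq_pure_iff.2 (hφ _)]
  rfl

theorem not_eventually_lt_of_map_bind_eq (hψ : ∀ m, ∀ᶠ t in a m, ψ t = m)
    (hφ : (p.bind a).map φ = p) : ¬ ∀ᶠ t in p.bind a, φ t < ψ t := by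
  intro hlt
  have below : ∀ᶠ m in p, ∃ k < m, (a m).map φ = pure k := by
    refine (mem_bind_s14.1 hlt).mono fun m hm => ?_
    have : Iio m ∈ (a m).map φ := ((hψ m).and hm).mono fun t ⟨hψt, hφt⟩ => hψt ▸ hφt
    exact eq_pure_of_finite_mem (finite_Iio m) this
  classical
  set κ : ℕ → ℕ := fun m => if h : ∃ k < m, (a m).map φ = pure k then h.choose else 0
  have hκ : ∀ᶠ m in p, κ m < m ∧ (a m).map φ = pure (κ m) :=
    below.mono fun m hm => by simpa only [κ, dif_pos hm] using hm.choose_spec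
  have hκp : p.map κ = p :=
    calc p.map κ = p.bind fun m => (a m).map φ := bind_congr (hκ.mono fun _ hm => hm.2.symm)
      _ = p := hφ
  exact map_ne_self_of_eventually_lt (hκ.mono fun _ hm => hm.1) hκp

theorem eventually_eq_of_bind_eq_of_eventually_eq (hφ : ∀ n, ∀ᶠ t in d n, φ t = n)
    (hψ : ∀ m, ∀ᶠ t in a m, ψ t = m) (h : p.bind d = p.bind a)
    (hdiag : ∀ᶠ t in p.bind a, φ t = ψ t) : ∀ᶠ n in p, d n = a n := by
  by_contra hne
  rw [← Ultrafilter.eventually_not] at hne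
  have separate : ∀ n, ∃ V : Set α, d n ≠ a n → V ∈ d n ∧ V ∉ a n := fun n => by
    by_cases hn : d n = a n
    · exact ⟨∅, fun h => (h hn).elim⟩
    · obtain ⟨V, hVd, hVa⟩ := Filter.not_le.1 fun hle => hn (coe_le_coe.1 hle).symm
      exact ⟨V, fun _ => ⟨hVd, hVa⟩⟩
  choose V hV using separate
  -- `W` meets the `n`-th block of `d` in a set that is `d n`-large but not `a n`-large.
  have hW : {t | t ∈ V (φ t)} ∈ p.bind a := by
    rw [← h]
    refine mem_bind_s14.2 (hne.mono fun n hn => ?_)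
    filter_upwards [(hV n hn).1, hφ n] with t ht hφt
    rwa [hφt]
  obtain ⟨m, hWm, hdiagm, hm⟩ := ((mem_bind_s14.1 hW).and ((mem_bind_s14.1 hdiag).and hne)).exists
  refine (hV m hm).2 ?_
  filter_upwards [hψ m, hdiagm, hWm] with t hψt hdt hWt
  rwa [hdt, hψt] at hWt

/-- Frolík's lemma. -/
theorem eventually_eq_of_bind_eq (hφ : ∀ n, ∀ᶠ t in d n, φ t = n)
    (hψ : ∀ m, ∀ᶠ t in a m, ψ t = m) (h : p.bind d = p.bind a) : ∀ᶠ n in p, d n = a n := by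
  have trichotomy : ∀ᶠ t in p.bind a, φ t < ψ t ∨ ψ t < φ t ∨ φ t = ψ t :=
    Eventually.of_forall fun t => by omega
  rcases Ultrafilter.eventually_or.1 trichotomy with hlt | hrest
  · exact absurd hlt (not_eventually_lt_of_map_bind_eq hψ (h ▸ map_bind_eq_self hφ))
  rcases Ultrafilter.eventually_or.1 hrest with hgt | hdiag
  · rw [← h] at hgt
    exact absurd hgt (not_eventually_lt_of_map_bind_eq hφ (h.symm ▸ map_bind_eq_self hψ))
  · exact eventually_eq_of_bind_eq_of_eventually_eq hφ hψ h hdiag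

theorem exists_eventually_eq_of_separated {W : ℕ → Set α} (hW : ∀ m n, W n ∈ d m ↔ m = n) :
    ∃ φ : α → ℕ, ∀ n, ∀ᶠ t in d n, φ t = n := by
  classical
  refine ⟨fun t => if h : ∃ n, t ∈ W n then Nat.find h else 0, fun n => ?_⟩
  have earlier : ∀ᶠ t in d n, ∀ k ∈ Iio n, t ∉ W k :=
    (eventually_all_finite (finite_Iio n)).2 fun k hk =>
      compl_mem_iff_notMem.2 fun h => (ne_of_gt hk) ((hW n k).1 h)
  filter_upwards [(hW n n).2 rfl, earlier] with t ht htk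
  rw [dif_pos ⟨n, ht⟩, Nat.find_eq_iff]
  exact ⟨ht, htk⟩

theorem exists_mem_subset_infinite_diff {S : Set ℕ} (hp : (p : Filter ℕ) ≤ cofinite)
    (hS : S ∈ p) : ∃ S₀ ∈ p, S₀ ⊆ S ∧ (S \ S₀).Infinite := by
  have hSinf : S.Infinite := fun hfin => compl_mem_iff_notMem.1 (hp hfin.compl_mem_cofinite) hS
  set θ := hSinf.natEmbedding
  set A := range fun k => (θ (2 * k) : ℕ)
  have hAS : A ⊆ S := by rintro - ⟨k, rfl⟩; exact (θ _).2
  have hA : A.Infinite := infinite_range_of_injective fun a b h => by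
    have := θ.injective (Subtype.ext h); omega
  have hSA : (S \ A).Infinite := by
    refine (infinite_range_of_injective (f := fun k => (θ (2 * k + 1) : ℕ)) fun a b h => ?_).mono ?_
    · have := θ.injective (Subtype.ext h); omega
    · rintro - ⟨k, rfl⟩
      refine ⟨(θ _).2, ?_⟩
      rintro ⟨j, hj⟩
      have := θ.injective (Subtype.ext hj); omega
  by_cases hAp : A ∈ p
  · exact ⟨A, hAp, hAS, hSA⟩
  · refine ⟨S \ A, inter_mem hS (compl_mem_iff_notMem.2 hAp), sdiff_subset, ?_⟩
    rwa [sdiff_sdiff_cancel_left hAS]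

theorem exists_injective_map_eq_self {S : Set ℕ} (hp : (p : Filter ℕ) ≤ cofinite) (hS : S ∈ p) :
    ∃ e : ℕ → ℕ, Injective e ∧ (∀ n, e n ∈ S) ∧ p.map e = p := by
  classical
  obtain ⟨S₀, hS₀, hS₀S, hroom⟩ := exists_mem_subset_infinite_diff hp hS
  set θ := hroom.natEmbedding
  set e : ℕ → ℕ := fun n => if n ∈ S₀ then n else θ n
  refine ⟨e, fun a b hab => ?_, fun n => ?_, ?_⟩
  · by_cases ha : a ∈ S₀ <;> by_cases hb : b ∈ S₀ <;> simp only [e, ha, hb, if_true, if_false] at hab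
    · exact hab
    · exact absurd (hab ▸ ha) (θ b).2.2
    · exact absurd (hab ▸ hb) (θ a).2.2
    · exact θ.injective (Subtype.ext hab)
  · by_cases hn : n ∈ S₀
    · simpa only [e, if_pos hn] using hS₀S hn
    · simpa only [e, if_neg hn] using (θ n).2.1
  · have : e =ᶠ[p] id := mem_of_superset hS₀ fun n hn => if_pos hn
    exact coe_injective (by rw [coe_map, Filter.map_congr this, Filter.map_id])

end Ultrafilter

section StoneCech

variable {α : Type*} [TopologicalSpace α] [DiscreteTopology α]

noncomputable def stoneCechEquivUltrafilter (α : Type*) [TopologicalSpace α] [DiscreteTopology α] :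
    StoneCech α ≃ₜ Ultrafilter α where
  toFun := stoneCechExtend (continuous_of_discreteTopology (f := (pure : α → Ultrafilter α)))
  invFun := Ultrafilter.extend stoneCechUnit
  left_inv := congrFun <| stoneCech_hom_ext
    ((continuous_ultrafilter_extend _).comp (continuous_stoneCechExtend _)) continuous_id <|
      funext fun a => by
        simp [stoneCechExtend_stoneCechUnit, ultrafilter_extend_pure]
  right_inv := congrFun <| Continuous.ext_on denseRange_pure
    ((continuous_stoneCechExtend _).comp (continuous_ultrafilter_extend _)) continuous_id <| by
      rintro - ⟨a, rfl⟩
      simp [stoneCechExtend_stoneCechUnit, ultrafilter_extend_pure]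
  continuous_toFun := continuous_stoneCechExtend _
  continuous_invFun := continuous_ultrafilter_extend _

theorem stoneCechEquivUltrafilter_stoneCechUnit (a : α) :
    stoneCechEquivUltrafilter α (stoneCechUnit a) = pure a :=
  stoneCechExtend_stoneCechUnit continuous_of_discreteTopology a

theorem stoneCechEquivUltrafilter_symm_pure (a : α) :
    (stoneCechEquivUltrafilter α).symm (pure a) = stoneCechUnit a := by
  rw [Homeomorph.symm_apply_eq, stoneCechEquivUltrafilter_stoneCechUnit]

theorem tendsto_stoneCechUnit (u : StoneCech α) :
    Tendsto stoneCechUnit (stoneCechEquivUltrafilter α u : Filter α) (𝓝 u) := by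
  have := ((stoneCechEquivUltrafilter α).symm.continuous.tendsto _).comp
    (Ultrafilter.tendsto_pure_self (stoneCechEquivUltrafilter α u))
  simpa only [Homeomorph.symm_apply_apply, Function.comp_def,
    stoneCechEquivUltrafilter_symm_pure] using this

theorem isOpen_singleton_stoneCechUnit (a : α) : IsOpen {(stoneCechUnit a : StoneCech α)} := by
  have : {(stoneCechUnit a : StoneCech α)} = stoneCechEquivUltrafilter α ⁻¹' {u | {a} ∈ u} := by
    ext z
    refine ⟨?_, fun hz => ?_⟩
    · rintro rfl
      simp [stoneCechEquivUltrafilter_stoneCechUnit]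
    obtain ⟨b, rfl, hb⟩ := Ultrafilter.eq_pure_of_finite_mem (finite_singleton a) hz
    rw [mem_singleton_iff, ← stoneCechEquivUltrafilter_symm_pure, ← hb,
      Homeomorph.symm_apply_apply]
  rw [this]
  exact (ultrafilter_isOpen_basic _).preimage (stoneCechEquivUltrafilter α).continuous

theorem isOpen_range_stoneCechUnit : IsOpen (range (stoneCechUnit : α → StoneCech α)) := by
  rw [← iUnion_singleton_eq_range]
  exact isOpen_iUnion isOpen_singleton_stoneCechUnit

variable {β : Type*} [TopologicalSpace β] [T2Space β] [CompactSpace β]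

theorem tendsto_stoneCechExtend {g : α → β} (hg : Continuous g) (u : StoneCech α) :
    Tendsto g (stoneCechEquivUltrafilter α u : Filter α) (𝓝 (stoneCechExtend hg u)) := by
  simpa only [stoneCechExtend_extends] using
    ((continuous_stoneCechExtend hg).tendsto u).comp (tendsto_stoneCechUnit u)

theorem stoneCechExtend_eq_of_tendsto {g : α → β} (hg : Continuous g) {u : StoneCech α} {y : β}
    (h : Tendsto g (stoneCechEquivUltrafilter α u : Filter α) (𝓝 y)) : stoneCechExtend hg u = y :=
  tendsto_nhds_unique (tendsto_stoneCechExtend hg u) h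

theorem stoneCechEquivUltrafilter_stoneCechExtend {γ : Type*} [TopologicalSpace γ]
    [DiscreteTopology γ] {g : α → StoneCech γ} (hg : Continuous g) (u : StoneCech α) :
    stoneCechEquivUltrafilter γ (stoneCechExtend hg u) =
      (stoneCechEquivUltrafilter α u).bind (stoneCechEquivUltrafilter γ ∘ g) :=
  (Ultrafilter.bind_eq_of_tendsto
    (((stoneCechEquivUltrafilter γ).continuous.tendsto _).comp (tendsto_stoneCechExtend hg u))).symm

end StoneCech

local notation "𝒰" => stoneCechEquivUltrafilter ℕ

theorem isClosed_omegaStar : IsClosed omegaStar :=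
  isOpen_range_stoneCechUnit.isClosed_compl

theorem le_cofinite_of_mem_omegaStar {p : StoneCech ℕ} (hp : p ∈ omegaStar) :
    (𝒰 p : Filter ℕ) ≤ cofinite := by
  refine (𝒰 p).le_cofinite_or_eq_pure.resolve_right ?_
  rintro ⟨n, hn⟩
  exact hp ⟨n, by rw [← stoneCechEquivUltrafilter_symm_pure, ← hn, Homeomorph.symm_apply_apply]⟩

theorem stoneCechEquivUltrafilter_stoneExt (g : ℕ → StoneCech ℕ) (p : StoneCech ℕ) :
    𝒰 (stoneExt g p) = (𝒰 p).bind (𝒰 ∘ g) :=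
  stoneCechEquivUltrafilter_stoneCechExtend _ p

theorem exists_eventually_eq_of_discreteTopology {g : ℕ → StoneCech ℕ} (hg : Injective g)
    (hd : DiscreteTopology (range g)) : ∃ φ : ℕ → ℕ, ∀ n, ∀ᶠ t in 𝒰 (g n), φ t = n := by
  have basis := ultrafilterBasis_is_basis.isInducing (𝒰).isInducing
  have separate : ∀ n, ∃ W : Set ℕ, W ∈ 𝒰 (g n) ∧ ∀ m, W ∈ 𝒰 (g m) → m = n := fun n => by
    obtain ⟨U, hU, hUg⟩ := discreteTopology_subtype_iff'.1 hd (g n) ⟨n, rfl⟩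
    obtain ⟨-, ⟨-, ⟨W, rfl⟩, rfl⟩, hgW, hWU⟩ :=
      basis.exists_subset_of_mem_open (hUg.symm.subset rfl).1 hU
    refine ⟨W, hgW, fun m hm => hg ?_⟩
    have : g m ∈ U ∩ range g := ⟨hWU hm, m, rfl⟩
    rwa [hUg] at this
  choose W hWn hWm using separate
  exact Ultrafilter.exists_eventually_eq_of_separated fun m n => ⟨hWm n m, fun h => h ▸ hWn m⟩

theorem isEmbedding_stoneExt {g : ℕ → StoneCech ℕ} (hg : Injective g)
    (hd : DiscreteTopology (range g)) : IsEmbedding (stoneExt g) := by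
  obtain ⟨φ, hφ⟩ := exists_eventually_eq_of_discreteTopology hg hd
  have hret : LeftInverse (stoneExt (stoneCechUnit ∘ φ)) (stoneExt g) := congrFun <|
    stoneCech_hom_ext ((continuous_stoneCechExtend _).comp (continuous_stoneCechExtend _))
      continuous_id <| funext fun n => by
        simp only [comp_apply, stoneExt, stoneCechExtend_stoneCechUnit]
        exact stoneCechExtend_eq_of_tendsto _
          ((tendsto_pure_nhds _ _).comp (tendsto_pure.2 (hφ n)))
  exact hret.isEmbedding (continuous_stoneCechExtend _) (continuous_stoneCechExtend _)

/-- `pOp p Y = Y ∪ pLimits p Y` holds by definition. -/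
def pLimits (p : StoneCech ℕ) (Y : Set (StoneCech ℕ)) : Set (StoneCech ℕ) :=
  {y | ∃ f : ℕ → StoneCech ℕ, Injective f ∧ range f ⊆ Y ∧ DiscreteTopology (range f) ∧
    stoneExt f p = y}

section pLimits

variable {p : StoneCech ℕ} {Y : Set (StoneCech ℕ)}

theorem pLimits_subset_closure : pLimits p Y ⊆ closure Y := by
  rintro - ⟨f, -, hfY, -, rfl⟩
  exact closure_mono hfY <| mem_closure_of_tendsto (tendsto_stoneCechExtend _ p)
    (Eventually.of_forall mem_range_self)

theorem pOp_subset_omegaStar_s14 (hY : Y ⊆ omegaStar) : pOp p Y ⊆ omegaStar :=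
  union_subset hY (pLimits_subset_closure.trans (closure_minimal hY isClosed_omegaStar))

theorem disjoint_pLimits {Y₀ Y₁ : Set (StoneCech ℕ)} (h : Disjoint Y₀ Y₁) :
    Disjoint (pLimits p Y₀) (pLimits p Y₁) := by
  rw [Set.disjoint_left]
  rintro - ⟨f₀, hi₀, hY₀, hd₀, rfl⟩ ⟨f₁, hi₁, hY₁, hd₁, he⟩
  obtain ⟨φ₀, hφ₀⟩ := exists_eventually_eq_of_discreteTopology hi₀ hd₀
  obtain ⟨φ₁, hφ₁⟩ := exists_eventually_eq_of_discreteTopology hi₁ hd₁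
  have hbind : (𝒰 p).bind (𝒰 ∘ f₀) = (𝒰 p).bind (𝒰 ∘ f₁) := by
    rw [← stoneCechEquivUltrafilter_stoneExt, ← stoneCechEquivUltrafilter_stoneExt, he]
  obtain ⟨n, hn⟩ := (Ultrafilter.eventually_eq_of_bind_eq hφ₀ hφ₁ hbind).exists
  exact h.ne_of_mem (hY₀ ⟨n, rfl⟩) (hY₁ ⟨n, rfl⟩) ((𝒰).injective hn)

theorem stoneExt_mem_pLimits (hp : p ∈ omegaStar) {g : ℕ → StoneCech ℕ} (hg : Injective g)
    (hd : DiscreteTopology (range g)) (hY : ∀ᶠ n in 𝒰 p, g n ∈ Y) :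
    stoneExt g p ∈ pLimits p Y := by
  obtain ⟨e, he, heY, hep⟩ :=
    Ultrafilter.exists_injective_map_eq_self (le_cofinite_of_mem_omegaStar hp) hY
  refine ⟨g ∘ e, hg.comp he, range_subset_iff.2 heY, hd.of_subset (range_comp_subset_range e g),
    (𝒰).injective ?_⟩
  rw [stoneCechEquivUltrafilter_stoneExt, stoneCechEquivUltrafilter_stoneExt]
  conv_rhs => rw [← hep]
  rfl

end pLimits

section Copies

variable {p : StoneCech ℕ} {s : Set (StoneCech ℕ)}

theorem exists_seq_of_homeomorph_omegaP (h : omegaP p ≃ₜ s) :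
    ∃ g : ℕ → StoneCech ℕ, Injective g ∧ DiscreteTopology (range g) ∧ range g ⊆ s ∧
      stoneExt g p ∈ s := by
  set ι : ℕ → omegaP p := fun n => ⟨stoneCechUnit n, Or.inl ⟨n, rfl⟩⟩
  have hι : IsEmbedding ι := IsEmbedding.subtypeVal.of_comp_iff.1 isEmbedding_stoneCechUnit
  have hg : IsEmbedding fun n => (h (ι n) : StoneCech ℕ) :=
    (IsEmbedding.subtypeVal.comp h.isEmbedding).comp hι
  have hlim : Tendsto (fun n => (h (ι n) : StoneCech ℕ)) (𝒰 p) (𝓝 (h ⟨p, Or.inr rfl⟩)) :=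
    (continuous_subtype_val.comp h.continuous).continuousAt.tendsto.comp
      (tendsto_subtype_rng.2 (tendsto_stoneCechUnit p))
  refine ⟨_, hg.injective, isDiscrete_iff_discreteTopology.1 hg.isInducing.isDiscrete_range,
    range_subset_iff.2 fun n => (h (ι n)).2, ?_⟩
  rw [stoneExt, stoneCechExtend_eq_of_tendsto _ hlim]
  exact (h _).2

theorem nonempty_homeomorph_omegaP {g : ℕ → StoneCech ℕ} (hg : Injective g)
    (hd : DiscreteTopology (range g)) :
    Nonempty (omegaP p ≃ₜ ↥(range g ∪ {stoneExt g p})) := by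
  have himage : stoneExt g '' omegaP p = range g ∪ {stoneExt g p} := by
    rw [omegaP, image_union, image_singleton, ← range_comp, stoneExt, stoneCechExtend_extends]
  exact ⟨((isEmbedding_stoneExt hg hd).homeomorphImage _).trans (Homeomorph.setCongr himage)⟩

end Copies

open Classical in
/-- Off `X`, a point is coloured `false` exactly when it is a `p`-limit of `true`-coloured points
of `X`; by Frolík's lemma it is then not also a `p`-limit of `false`-coloured ones. -/
noncomputable def pExtendColoring (p : StoneCech ℕ) (X : Set (StoneCech ℕ))
    (c : StoneCech ℕ → Bool) (z : StoneCech ℕ) : Bool :=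
  if z ∈ X then c z else decide (z ∉ pLimits p (X ∩ c ⁻¹' {true}))

theorem pExtendColoring_ne {p x : StoneCech ℕ} {X : Set (StoneCech ℕ)} {c : StoneCech ℕ → Bool}
    {b : Bool} (hxX : x ∉ X) (hx : x ∈ pLimits p (X ∩ c ⁻¹' {b})) :
    pExtendColoring p X c x ≠ b := by
  cases b
  · have hdisj : Disjoint (X ∩ c ⁻¹' {false}) (X ∩ c ⁻¹' {true}) :=
      ((disjoint_singleton.2 Bool.false_ne_true).preimage c).mono inter_subset_right
        inter_subset_right
    simpa [pExtendColoring, hxX] using fun ht => (disjoint_pLimits hdisj).ne_of_mem hx ht rfl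
  · simp [pExtendColoring, hxX, hx]

/-- Lemma 5.9: a 2-coloring of a `𝒯(p)`-open set `X ⊆ ω*` with no monochromatic copy of
`ω ∪ {p}` extends to a 2-coloring of `X^p` with no monochromatic copy of `ω ∪ {p}`. -/
theorem coloring_extends_to_pOp (p : StoneCech ℕ) (hp : p ∈ omegaStar)
    (X : Set (StoneCech ℕ)) (hX : TpOpen p X) (c : StoneCech ℕ → Bool)
    (hc : ∀ s : Set (StoneCech ℕ), s ⊆ X → Nonempty (↥(omegaP p) ≃ₜ ↥s) →
      ¬ ∃ b : Bool, ∀ x ∈ s, c x = b) :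
    ∃ c' : StoneCech ℕ → Bool, (∀ x ∈ X, c' x = c x) ∧
      ∀ s : Set (StoneCech ℕ), s ⊆ pOp p X → Nonempty (↥(omegaP p) ≃ₜ ↥s) →
        ¬ ∃ b : Bool, ∀ x ∈ s, c' x = b := by
  refine ⟨pExtendColoring p X c, fun x hx => if_pos hx, ?_⟩
  rintro s hs ⟨h⟩ ⟨b, hb⟩
  obtain ⟨g, hg, hd, hgs, hxs⟩ := exists_seq_of_homeomorph_omegaP h
  rcases Ultrafilter.eventually_or.1 (Eventually.of_forall (f := 𝒰 p) fun n => em (g n ∈ X))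
    with hin | hout
  · have hcol : ∀ᶠ n in 𝒰 p, g n ∈ X ∩ c ⁻¹' {b} := hin.mono fun n hn =>
      ⟨hn, by rw [mem_preimage, ← hb _ (hgs ⟨n, rfl⟩), pExtendColoring, if_pos hn]; rfl⟩
    have hlim := stoneExt_mem_pLimits hp hg hd hcol
    by_cases hxX : stoneExt g p ∈ X
    · obtain ⟨f, hf, hfY, hfd, hfx⟩ := hlim
      refine hc _ (union_subset (hfY.trans inter_subset_left) (singleton_subset_iff.2 hxX))
        (hfx ▸ nonempty_homeomorph_omegaP hf hfd) ⟨b, ?_⟩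
      rintro y (⟨n, rfl⟩ | rfl)
      · exact (hfY ⟨n, rfl⟩).2
      · rw [← hb _ hxs, pExtendColoring, if_pos hxX]
    · exact pExtendColoring_ne hxX hlim (hb _ hxs)
  · have hlim : stoneExt g p ∈ pLimits p (omegaStar \ X) := stoneExt_mem_pLimits hp hg hd <|
      hout.mono fun n hn => ⟨pOp_subset_omegaStar_s14 hX.1 (hs (hgs ⟨n, rfl⟩)), hn⟩
    have hxX : stoneExt g p ∉ X := (hX.2 ▸ Or.inr hlim : stoneExt g p ∈ omegaStar \ X).2
    exact (disjoint_pLimits disjoint_sdiff_right).ne_of_mem ((hs hxs).resolve_left hxX) hlim rfl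
end

section
/- If Y is an infinite countably compact subspace of ω*, then Y contains a subspace homeomorphic to ω ∪ {p} (as a subspace of β(ω)) for some p ∈ ω*. -/
/-- A space is countably compact if every countable open cover has a finite subcover. -/
def CountablyCompact (Y : Type*) [TopologicalSpace Y] : Prop :=
  ∀ U : ℕ → Set Y, (∀ n, IsOpen (U n)) → (⋃ n, U n) = Set.univ →
    ∃ t : Finset ℕ, (⋃ n ∈ t, U n) = Set.univ

open Set Filter Topology Function

theorem CountablyCompact.exists_mapClusterPt {Y : Type*} [TopologicalSpace Y]
    (hY : CountablyCompact Y) (u : ℕ → Y) : ∃ y, MapClusterPt y atTop u := by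
  by_contra! h
  simp only [mapClusterPt_atTop_iff_forall_mem_closure, not_forall] at h
  obtain ⟨t, ht⟩ := hY (fun N => (closure (u '' Ici N))ᶜ) (fun _ => isClosed_closure.isOpen_compl)
    (eq_univ_of_forall fun y => mem_iUnion.2 (h y))
  obtain ⟨N, hN, hmem⟩ := mem_iUnion₂.1 (ht ▸ mem_univ (u (t.sup id)))
  exact hmem (subset_closure ⟨_, Finset.le_sup (f := id) hN, rfl⟩)

section Separation

variable {X : Type*} [TopologicalSpace X]

theorem not_mapClusterPt_of_pairwise_disjoint {d : ℕ → X} {U : ℕ → Set X}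
    (hU : ∀ n, IsOpen (U n)) (hdU : ∀ n, d n ∈ U n) (hdisj : Pairwise (Disjoint on U)) (m : ℕ) :
    ¬MapClusterPt (d m) atTop d := fun h => by
  obtain ⟨n, hn, hne⟩ :=
    ((h.frequently ((hU m).mem_nhds (hdU m))).and_eventually (eventually_ne_atTop m)).exists
  exact disjoint_left.1 (hdisj hne) (hdU n) hn

variable [TotallySeparatedSpace X] {Y : Set X}

theorem Set.Infinite.exists_isOpen_split {E : Set X} (hE : IsOpen E) (hYE : (Y ∩ E).Infinite) :
    ∃ E' B : Set X, IsOpen E' ∧ IsOpen B ∧ E' ⊆ E ∧ B ⊆ E ∧ Disjoint E' B ∧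
      (Y ∩ E').Infinite ∧ (Y ∩ B).Nonempty := by
  obtain ⟨u, ⟨huY, huE⟩, v, ⟨hvY, hvE⟩, huv⟩ := hYE.nontrivial
  obtain ⟨S, hS, huS, hvS⟩ := exists_isClopen_of_totally_separated huv
  have hsplit : Y ∩ E = Y ∩ (E ∩ S) ∪ Y ∩ (E ∩ Sᶜ) := by
    rw [← inter_union_distrib_left, ← inter_union_distrib_left, union_compl_self, inter_univ]
  have hdisj : Disjoint (E ∩ S) (E ∩ Sᶜ) := disjoint_compl_right.mono inter_subset_right
    inter_subset_right
  rcases infinite_union.1 (hsplit ▸ hYE) with h | h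
  · exact ⟨E ∩ S, E ∩ Sᶜ, hE.inter hS.isOpen, hE.inter hS.compl.isOpen, inter_subset_left,
      inter_subset_left, hdisj, h, v, hvY, hvE, hvS⟩
  · exact ⟨E ∩ Sᶜ, E ∩ S, hE.inter hS.compl.isOpen, hE.inter hS.isOpen, inter_subset_left,
      inter_subset_left, hdisj.symm, h, u, huY, huE, huS⟩

theorem Set.Infinite.exists_seq_pairwise_disjoint_isOpen (hY : Y.Infinite) :
    ∃ (d : ℕ → X) (U : ℕ → Set X), (∀ n, d n ∈ Y) ∧ (∀ n, IsOpen (U n)) ∧ (∀ n, d n ∈ U n) ∧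
      Pairwise (Disjoint on U) := by
  have step (E : {E : Set X // IsOpen E ∧ (Y ∩ E).Infinite}) :
      ∃ (E' : {E : Set X // IsOpen E ∧ (Y ∩ E).Infinite}) (B : Set X), IsOpen B ∧
        E'.1 ⊆ E.1 ∧ B ⊆ E.1 ∧ Disjoint E'.1 B ∧ (Y ∩ B).Nonempty := by
    obtain ⟨E', B, hE', hB, hE'E, hBE, hdisj, hYE', hYB⟩ := E.2.2.exists_isOpen_split E.2.1
    exact ⟨⟨E', hE', hYE'⟩, B, hB, hE'E, hBE, hdisj, hYB⟩
  choose next B hB hnext hBE hdisj hYB using step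
  let E (n : ℕ) := next^[n] ⟨univ, isOpen_univ, by rwa [inter_univ]⟩
  have hE_succ (n : ℕ) : E (n + 1) = next (E n) := iterate_succ_apply' _ _ _
  have hE_anti : Antitone fun n => (E n).1 :=
    antitone_nat_of_succ_le fun n => hE_succ n ▸ hnext (E n)
  refine ⟨fun n => (hYB (E n)).some, fun n => B (E n), fun n => (hYB _).some_mem.1,
    fun n => hB _, fun n => (hYB _).some_mem.2, (pairwise_disjoint_on _).2 fun m n hmn => ?_⟩
  exact ((hdisj (E m)).mono_left ((hBE _).trans (hE_succ m ▸ hE_anti hmn))).symm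

end Separation

namespace StoneCech

variable {α : Type*} [TopologicalSpace α]

theorem isEmbedding_stoneCechExtend {X : Type*} [TopologicalSpace X] [CompactSpace X]
    [T2Space X] {d : α → X} (hd : Continuous d) {φ : X → StoneCech α} (hφ : Continuous φ)
    (h : ∀ a, φ (d a) = stoneCechUnit a) : IsEmbedding (stoneCechExtend hd) := by
  have hφψ : LeftInverse φ (stoneCechExtend hd) :=
    congrFun <| stoneCech_hom_ext (hφ.comp (continuous_stoneCechExtend hd)) continuous_id
      (funext fun a => by simp [stoneCechExtend_stoneCechUnit, h])
  exact hφψ.isEmbedding hφ (continuous_stoneCechExtend hd)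

variable [DiscreteTopology α]

instance extremallyDisconnected : ExtremallyDisconnected (StoneCech α) :=
  CompactT2.Projective.extremallyDisconnected StoneCech.projective

theorem exists_continuous_eqOn_of_pairwise_disjoint {ι Z : Type*} [Nonempty ι]
    [TopologicalSpace Z] [CompactSpace Z] [T2Space Z] {U : ι → Set (StoneCech α)}
    (hU : ∀ i, IsOpen (U i)) (hdisj : Pairwise (Disjoint on U)) (z : ι → Z) :
    ∃ φ : StoneCech α → Z, Continuous φ ∧ ∀ i, EqOn φ (fun _ => z i) (U i) := by
  classical
  let idx (a : α) : ι :=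
    if h : ∃ i, stoneCechUnit a ∈ U i then h.choose else Classical.arbitrary ι
  have idx_eq {a : α} {i : ι} (ha : stoneCechUnit a ∈ U i) : idx a = i := by
    have h : ∃ j, stoneCechUnit a ∈ U j := ⟨i, ha⟩
    simp only [idx, dif_pos h]
    exact hdisj.eq (not_disjoint_iff.2 ⟨_, h.choose_spec, ha⟩)
  have hg : Continuous (z ∘ idx) := continuous_of_discreteTopology
  refine ⟨stoneCechExtend hg, continuous_stoneCechExtend hg, fun i => ?_⟩
  refine EqOn.of_subset_closure ?_ (continuous_stoneCechExtend hg).continuousOn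
    continuousOn_const inter_subset_left (denseRange_stoneCechUnit.open_subset_closure_inter (hU i))
  rintro _ ⟨hx, a, rfl⟩
  simp [stoneCechExtend_stoneCechUnit, idx_eq hx]

end StoneCech

theorem countably_compact_contains_omega_union_p_general (Y : Set (StoneCech ℕ))
    (hYinf : Y.Infinite) (hcc : CountablyCompact ↥Y) :
    ∃ p ∈ omegaStar, ∃ s : Set (StoneCech ℕ), s ⊆ Y ∧ Nonempty (↥(omegaP p) ≃ₜ ↥s) := by
  obtain ⟨d, U, hdY, hU, hdU, hUdisj⟩ := hYinf.exists_seq_pairwise_disjoint_isOpen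
  obtain ⟨φ, hφ, hφU⟩ :=
    StoneCech.exists_continuous_eqOn_of_pairwise_disjoint hU hUdisj stoneCechUnit
  have hd : Continuous d := continuous_of_discreteTopology
  have hψ := StoneCech.isEmbedding_stoneCechExtend hd hφ fun n => hφU n (hdU n)
  have hψd : ∀ n, stoneCechExtend hd (stoneCechUnit n) = d n := stoneCechExtend_stoneCechUnit hd
  obtain ⟨⟨q, hqY⟩, hq⟩ := hcc.exists_mapClusterPt fun n => ⟨d n, hdY n⟩
  replace hq : MapClusterPt q atTop d := hq.continuousAt_comp continuous_subtype_val.continuousAt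
  obtain ⟨p, rfl⟩ : q ∈ range (stoneCechExtend hd) :=
    (isCompact_range hψ.continuous).isClosed.closure_subset_iff.2
      (range_subset_iff.2 fun n => ⟨_, hψd n⟩)
      (closure_mono (image_subset_range _ _) (mapClusterPt_atTop_iff_forall_mem_closure.1 hq 0))
  refine ⟨p, ?_, _, ?_, ⟨hψ.homeomorphImage (omegaP p)⟩⟩
  · rintro ⟨m, rfl⟩
    exact not_mapClusterPt_of_pairwise_disjoint hU hdU hUdisj m (hψd m ▸ hq)
  · rintro _ ⟨x, ⟨n, rfl⟩ | rfl, rfl⟩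
    · exact (hψd n).symm ▸ hdY n
    · exact hqY

/-- Every infinite countably compact subspace `Y` of `ω*` contains a copy of `ω ∪ {p}`
for some `p ∈ ω*`. -/
theorem countably_compact_contains_omega_union_p (Y : Set (StoneCech ℕ))
    (hYsub : Y ⊆ omegaStar) (hYinf : Y.Infinite) (hcc : CountablyCompact ↥Y) :
    ∃ p ∈ omegaStar, ∃ s : Set (StoneCech ℕ), s ⊆ Y ∧ Nonempty (↥(omegaP p) ≃ₜ ↥s) :=
  countably_compact_contains_omega_union_p_general Y hYinf hcc
end

section
/- If X and Y are topological spaces with X → (Y)¹₂, then PX → (PY)¹₂, where PZ denotes the set Z with the smallest topology refining that of Z in which countable intersections of open sets are open (the P-space coreflection). -/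
/-- The `P`-space coreflection of a topology `t`: the smallest topology refining `t` in
which countable intersections of `t`-open sets are open. -/
def PTopology {Z : Type*} (t : TopologicalSpace Z) : TopologicalSpace Z :=
  TopologicalSpace.generateFrom
    {s : Set Z | ∃ F : ℕ → Set Z, (∀ n, t.IsOpen (F n)) ∧ s = ⋂ n, F n}

/-- `CopiesIn Y tY tX P`: with respect to topologies `tY` on `Y` and `tX` on `X`,
the set `P ⊆ X` contains a subspace homeomorphic to `Y`. -/
def CopiesIn (Y : Type*) (tY : TopologicalSpace Y) {X : Type*}
    (tX : TopologicalSpace X) (P : Set X) : Prop :=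
  ∃ s : Set X, s ⊆ P ∧
    Nonempty (@Homeomorph Y s tY (TopologicalSpace.induced (Subtype.val : s → X) tX))

/-! Preimages commute with countable intersections, so `P` commutes with induced topologies.
Hence an embedding `Y → X` is also an embedding `PY → PX`, and whichever piece of a partition
of `X` contains a copy of `Y` also contains a copy of `PY` in `PX`. -/

open Topology

lemma PTopology_induced {Z X : Type*} (f : Z → X) (t : TopologicalSpace X) :
    PTopology (t.induced f) = (PTopology t).induced f := by
  unfold PTopology
  rw [induced_generateFrom_eq]
  congr 1
  ext s
  constructor
  · rintro ⟨F, hF, rfl⟩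
    choose U hU hUF using fun n => isOpen_induced_iff.1 (hF n)
    exact ⟨⋂ n, U n, ⟨U, hU, rfl⟩, by simp only [Set.preimage_iInter, hUF]⟩
  · rintro ⟨_, ⟨F, hF, rfl⟩, rfl⟩
    exact ⟨fun n => f ⁻¹' F n, fun n => ⟨F n, hF n, rfl⟩, Set.preimage_iInter⟩

lemma isInducing_PTopology {Z X : Type*} {tZ : TopologicalSpace Z} {tX : TopologicalSpace X}
    {f : Z → X} (hf : @IsInducing Z X tZ tX f) :
    @IsInducing Z X (PTopology tZ) (PTopology tX) f :=
  @IsInducing.mk Z X (PTopology tZ) (PTopology tX) f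
    ((congrArg PTopology hf.eq_induced).trans (PTopology_induced f tX))

def Homeomorph.pTopology {Y S : Type*} {tY : TopologicalSpace Y} {tS : TopologicalSpace S}
    (e : @Homeomorph Y S tY tS) : @Homeomorph Y S (PTopology tY) (PTopology tS) :=
  @Equiv.toHomeomorphOfIsInducing Y S (PTopology tY) (PTopology tS) e.toEquiv
    (isInducing_PTopology (@Homeomorph.isInducing Y S tY tS e))

lemma CopiesIn.pTopology {Y X : Type*} {tY : TopologicalSpace Y} {tX : TopologicalSpace X}
    {P : Set X} (hP : CopiesIn Y tY tX P) : CopiesIn Y (PTopology tY) (PTopology tX) P := by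
  obtain ⟨s, hsP, ⟨e⟩⟩ := hP
  refine ⟨s, hsP, ?_⟩
  rw [← PTopology_induced]
  exact ⟨e.pTopology⟩

/-- If `X → (Y)¹₂` then `PX → (PY)¹₂`, where `PZ` is the `P`-space coreflection. -/
theorem arrow_PTopology (X Y : Type*) (tX : TopologicalSpace X) (tY : TopologicalSpace Y)
    (h : ∀ P₀ P₁ : Set X, P₀ ∪ P₁ = Set.univ →
      CopiesIn Y tY tX P₀ ∨ CopiesIn Y tY tX P₁) :
    ∀ P₀ P₁ : Set X, P₀ ∪ P₁ = Set.univ →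
      CopiesIn Y (PTopology tY) (PTopology tX) P₀ ∨
        CopiesIn Y (PTopology tY) (PTopology tX) P₁ :=
  fun P₀ P₁ hP => (h P₀ P₁ hP).imp CopiesIn.pTopology CopiesIn.pTopology
end

section
/- Consider the rationals ℚ with the order topology. Then ℚ → (ℚ)¹₂: whenever ℚ is partitioned into two sets, at least one of them contains a subspace homeomorphic to ℚ. -/
/-- A countable, densely ordered, unbounded, nonempty linear order with the order
topology is homeomorphic to `ℚ`. -/
lemma key_homeomorph_rat (X : Type*) [LinearOrder X] [TopologicalSpace X]
    [OrderTopology X] [Countable X] [DenselyOrdered X] [NoMinOrder X] [NoMaxOrder X]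
    [Nonempty X] : Nonempty (ℚ ≃ₜ X) := by
  obtain ⟨e⟩ := Order.iso_of_countable_dense ℚ X
  exact ⟨e.toHomeomorph⟩

/-- A subset of `ℚ` that has a point strictly between any two rationals is,
as a subspace, homeomorphic to `ℚ`. -/
lemma subset_homeomorph_rat (P : Set ℚ)
    (h : ∀ x y : ℚ, x < y → ∃ z ∈ P, x < z ∧ z < y) :
    Nonempty (ℚ ≃ₜ ↥P) := by
  haveI : Nonempty ↥P := by
    obtain ⟨z, hz, -⟩ := h 0 1 one_pos
    exact ⟨⟨z, hz⟩⟩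
  haveI : DenselyOrdered ↥P := by
    refine ⟨fun a b hab => ?_⟩
    obtain ⟨z, hz, h1, h2⟩ := h a b hab
    exact ⟨⟨z, hz⟩, h1, h2⟩
  haveI : NoMinOrder ↥P := by
    refine ⟨fun a => ?_⟩
    obtain ⟨z, hz, -, h2⟩ := h ((a : ℚ) - 1) a (by linarith)
    exact ⟨⟨z, hz⟩, h2⟩
  haveI : NoMaxOrder ↥P := by
    refine ⟨fun a => ?_⟩
    obtain ⟨z, hz, h1, -⟩ := h a ((a : ℚ) + 1) (by linarith)
    exact ⟨⟨z, hz⟩, h1⟩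
  haveI : OrderTopology ↥P :=
    induced_orderTopology _ (fun {_ _} => Iff.rfl) <| @fun x y hlt => by
      obtain ⟨z, hz, h1, h2⟩ := h x y hlt
      exact ⟨⟨z, hz⟩, h1, h2⟩
  exact key_homeomorph_rat ↥P

/-- `ℚ → (ℚ)¹₂`: whenever the rationals (with their usual topology) are partitioned into
two sets, at least one of them contains a subspace homeomorphic to `ℚ`. -/
theorem rat_arrow_rat (P₀ P₁ : Set ℚ) (hpart : P₀ ∪ P₁ = Set.univ) :
    (∃ s : Set ℚ, s ⊆ P₀ ∧ Nonempty (ℚ ≃ₜ ↥s)) ∨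
    (∃ s : Set ℚ, s ⊆ P₁ ∧ Nonempty (ℚ ≃ₜ ↥s)) := by
  by_cases h : ∀ x y : ℚ, x < y → ∃ z ∈ P₀, x < z ∧ z < y
  · exact Or.inl ⟨P₀, le_refl _, subset_homeomorph_rat P₀ h⟩
  · push_neg at h
    obtain ⟨a, b, hab, hP₀⟩ := h
    refine Or.inr ⟨Set.Ioo a b, ?_, ?_⟩
    · intro q hq
      have hmem : q ∈ P₀ ∪ P₁ := hpart ▸ Set.mem_univ q
      rcases hmem with hq0 | hq1
      · exact absurd (hP₀ q hq0 hq.1) (not_le.mpr hq.2)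
      · exact hq1
    · haveI : Nonempty ↥(Set.Ioo a b) := Set.nonempty_Ioo_subtype hab
      exact key_homeomorph_rat ↥(Set.Ioo a b)
end
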